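/- arXiv:2605.20070 — 7 statements merged into one kernel-verified Lean document; each statement's English description precedes it below -/
import Mathlib

section
/- Let G be a directed graph and let C be a maximum-cardinality packing of vertex-disjoint cycles each of length at most L (L ≥ 2). If a vertex v lies on some cycle of length at most L in G but is not covered by C, then there is a packing of cycles of length at most L covering v whose cardinality is at least the cardinality of C minus ((L−1)² − 1). -/
/-- `c` is a directed cycle in the digraph with arc relation `E`. -/
def IsCycle {V : Type*} (E : V → V → Prop) (c : List V) : Prop :=
  c.Nodup ∧ 2 ≤ c.length ∧ c.Chain' E ∧ ∀ h : c ≠ [], E (c.getLast h) (c.head h)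

/-- `P` is a packing of vertex-disjoint directed cycles. -/
def IsPacking {V : Type*} (E : V → V → Prop) (P : List (List V)) : Prop :=
  (∀ c ∈ P, IsCycle E c) ∧ P.Pairwise (fun c d => ∀ v ∈ c, v ∉ d)

/-- The cardinality of a packing: the total number of covered vertices. -/
def packCard {V : Type*} (P : List (List V)) : ℕ := (P.map List.length).sum

/-- `v` is covered by the packing `P`. -/
def Covered {V : Type*} (P : List (List V)) (v : V) : Prop := ∃ c ∈ P, v ∈ c

/-
Keep the cycles of `P` that avoid the short cycle `c` through `v` and add `c` itself. The
discarded cycles of `P` are disjoint and each meets `c` away from the uncovered vertex `v`,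
so there are at most `|c| - 1` of them, covering at most `(|c| - 1) L` vertices. Since
`|c| ≤ L`, the loss `(|c| - 1) L - |c|` is at most `(L - 1)² - 1`.
-/

namespace IsPacking

variable {V : Type*} {E : V → V → Prop} {P : List (List V)}

theorem sublist (hP : IsPacking E P) {Q : List (List V)} (hQP : Q.Sublist P) : IsPacking E Q :=
  ⟨fun c hc => hP.1 c (hQP.subset hc), hP.2.sublist hQP⟩

theorem cons (hP : IsPacking E P) {c : List V} (hc : IsCycle E c)
    (hdisj : ∀ d ∈ P, ∀ x ∈ c, x ∉ d) : IsPacking E (c :: P) := by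
  refine ⟨fun d hd => ?_, List.pairwise_cons.2 ⟨hdisj, hP.2⟩⟩
  rcases List.mem_cons.1 hd with rfl | hd
  exacts [hc, hP.1 d hd]

end IsPacking

theorem packCard_le_length_mul {V : Type*} {R : List (List V)} {L : ℕ}
    (hlen : ∀ d ∈ R, d.length ≤ L) : packCard R ≤ R.length * L := by
  simpa [packCard] using List.sum_le_card_nsmul (R.map List.length) L (by simpa using hlen)

theorem length_le_of_pairwise_disjoint {V : Type*} (R : List (List V))
    (hR : R.Pairwise (fun d e => ∀ x ∈ d, x ∉ e)) {s : List V}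
    (hmeet : ∀ d ∈ R, ∃ x ∈ d, x ∈ s) : R.length ≤ s.length := by
  classical
  induction R generalizing s with
  | nil => simp
  | cons d R ih =>
    obtain ⟨hdR, hR⟩ := List.pairwise_cons.1 hR
    obtain ⟨x, hxd, hxs⟩ := hmeet d List.mem_cons_self
    have hmeet' : ∀ e ∈ R, ∃ y ∈ e, y ∈ s.erase x := by
      intro e he
      obtain ⟨y, hye, hys⟩ := hmeet e (List.mem_cons_of_mem d he)
      have hyx : y ≠ x := by
        rintro rfl
        exact hdR e he y hxd hye
      exact ⟨y, hye, (List.mem_erase_of_ne hyx).2 hys⟩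
    have := ih hR hmeet'
    rw [List.length_erase_of_mem hxs] at this
    have := List.length_pos_of_mem hxs
    simp only [List.length_cons]
    omega

theorem packCard_filter_le {V : Type*} {P : List (List V)}
    (hP : P.Pairwise (fun d e => ∀ x ∈ d, x ∉ e)) {L : ℕ} (hlen : ∀ d ∈ P, d.length ≤ L)
    {c : List V} {v : V} (hvc : v ∈ c) (hv : ¬ Covered P v) (p : List V → Bool)
    (hmeet : ∀ d ∈ P, p d → ∃ x ∈ d, x ∈ c) : packCard (P.filter p) ≤ (c.length - 1) * L := by
  classical
  have hcount : (P.filter p).length ≤ (c.erase v).length := by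
    refine length_le_of_pairwise_disjoint _ (hP.sublist List.filter_sublist) fun d hd => ?_
    obtain ⟨hdP, hpd⟩ := List.mem_filter.1 hd
    obtain ⟨x, hxd, hxc⟩ := hmeet d hdP hpd
    have hxv : x ≠ v := by
      rintro rfl
      exact hv ⟨d, hdP, hxd⟩
    exact ⟨x, hxd, (List.mem_erase_of_ne hxv).2 hxc⟩
  rw [List.length_erase_of_mem hvc] at hcount
  exact (packCard_le_length_mul fun d hd => hlen d (List.mem_filter.1 hd).1).trans
    (Nat.mul_le_mul_right L hcount)

theorem sub_one_mul_le {k L : ℕ} (hkL : k ≤ L) : (k - 1) * L ≤ k + ((L - 1) ^ 2 - 1) := by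
  obtain _ | k := k
  · simp
  obtain _ | L := L
  · omega
  have : k * L ≤ L * L := Nat.mul_le_mul_right L (by omega)
  simp only [Nat.add_sub_cancel, sq, Nat.mul_succ]
  omega

theorem stmt3_general {V : Type*} (E : V → V → Prop) (L : ℕ)
    (P : List (List V))
    (hP : IsPacking E P) (hlen : ∀ c ∈ P, c.length ≤ L)
    (v : V) (c : List V) (hc : IsCycle E c) (hlc : c.length ≤ L)
    (hvc : v ∈ c) (hv : ¬ Covered P v) :
    ∃ Q : List (List V), IsPacking E Q ∧ (∀ d ∈ Q, d.length ≤ L) ∧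
      Covered Q v ∧ packCard P ≤ packCard Q + ((L - 1) ^ 2 - 1) := by
  classical
  let meets : List V → Prop := fun d => ∃ x ∈ d, x ∈ c
  set R := P.filter meets
  set A := P.filter (fun d => ¬ meets d)
  have hA : IsPacking E (c :: A) := by
    refine (hP.sublist List.filter_sublist).cons hc fun d hd x hxc hxd => ?_
    exact (of_decide_eq_true (List.mem_filter.1 hd).2) ⟨x, hxd, hxc⟩
  have hRcard : packCard R ≤ (c.length - 1) * L :=
    packCard_filter_le hP.2 hlen hvc hv _ fun d _ hd => of_decide_eq_true hd
  have hsplit : packCard R + packCard A = packCard P :=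
    List.sum_map_filter_add_sum_map_filter_not meets List.length P
  refine ⟨c :: A, hA, ?_, ⟨c, List.mem_cons_self, hvc⟩, ?_⟩
  · intro d hd
    rcases List.mem_cons.1 hd with rfl | hd
    exacts [hlc, hlen d (List.mem_filter.1 hd).1]
  · have hQ : packCard (c :: A) = c.length + packCard A := by simp [packCard]
    have := sub_one_mul_le hlc
    omega

/-- If `P` is a maximum-cardinality packing of cycles of length at most `L` (`L ≥ 2`)
and `v` lies on some cycle of length at most `L` but is uncovered by `P`, then some
packing of cycles of length at most `L` covers `v` with cardinality at least
`packCard P − ((L−1)² − 1)`. -/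
theorem stmt3 {V : Type*} (E : V → V → Prop) (L : ℕ) (hL : 2 ≤ L)
    (P : List (List V))
    (hP : IsPacking E P) (hlen : ∀ c ∈ P, c.length ≤ L)
    (hmax : ∀ Q : List (List V), IsPacking E Q → (∀ c ∈ Q, c.length ≤ L) →
      packCard Q ≤ packCard P)
    (v : V) (c : List V) (hc : IsCycle E c) (hlc : c.length ≤ L)
    (hvc : v ∈ c) (hv : ¬ Covered P v) :
    ∃ Q : List (List V), IsPacking E Q ∧ (∀ d ∈ Q, d.length ≤ L) ∧
      Covered Q v ∧ packCard P ≤ packCard Q + ((L - 1) ^ 2 - 1) :=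
  stmt3_general E L P hP hlen v c hc hlc hvc hv
end

section
/- Let G be a graph with Edmonds–Gallai decomposition D(G), A(G), C(G). Then every maximum matching of G contains a near-perfect matching of each component of G[D(G)], a perfect matching of each component of G[C(G)], and matches every vertex of A(G) to a vertex in a distinct component of G[D(G)]. -/
/-- `M` is a maximum matching of `G` (a matching covering the most vertices). -/
def IsMaxMatching {V : Type*} (G : SimpleGraph V) (M : G.Subgraph) : Prop :=
  M.IsMatching ∧ ∀ N : G.Subgraph, N.IsMatching → N.support.ncard ≤ M.support.ncard

/-- `D(G)`: the set of vertices missed by at least one maximum matching of `G`. -/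
def Dset {V : Type*} (G : SimpleGraph V) : Set V :=
  {v | ∃ M : G.Subgraph, IsMaxMatching G M ∧ v ∉ M.support}

/-- `A(G)`: vertices outside `D(G)` adjacent to a vertex of `D(G)`. -/
def Aset {V : Type*} (G : SimpleGraph V) : Set V :=
  {v | v ∉ Dset G ∧ ∃ u ∈ Dset G, G.Adj v u}

/-- `C(G)`: the remaining vertices. -/
def Cset {V : Type*} (G : SimpleGraph V) : Set V :=
  {v | v ∉ Dset G ∧ v ∉ Aset G}


/-!
The argument runs through maximum matchings of `G - F` for `F ⊆ A(G)`. Following the edges of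
two matchings alternately produces even alternating paths; switching such a path that starts at
a vertex missed by a maximum matching gives another maximum matching, and every vertex of
`D(G - F)` is the end of one. Consequences: a maximum matching sends each vertex of `A` into `D`;
deleting a vertex of `A` does not change `D` (stability), so `D(G - A) = D(G)`; and by Gallai's
lemma a maximum matching of `G - A` misses at most one vertex in each component of `G[D]`.
Deleting the `A`-edges of a maximum matching of `G` one at a time leads to a maximum matching of
`G - A`, so each component of `G[D]` has at most one vertex not matched inside `D`, and an
alternating path from a missed vertex shows that it has one. The claims about `A` and `C` follow.
-/

namespace Set

lemma ncard_insert_sdiff_singleton {α : Type*} [Finite α] {s : Set α} {a b : α} (ha : a ∉ s)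
    (hb : b ∈ insert a s) : (insert a s \ {b}).ncard = s.ncard := by
  rw [ncard_sdiff_singleton_of_mem hb, ncard_insert_of_notMem ha, Nat.add_sub_cancel]

end Set

namespace SimpleGraph

variable {V : Type*} {G : SimpleGraph V}

lemma connectedComponentMk_induce_eq_of_adj {s : Set V} {u v : s} (h : G.Adj u v) :
    (G.induce s).connectedComponentMk u = (G.induce s).connectedComponentMk v :=
  ConnectedComponent.sound (induce_adj.mpr h).reachable

namespace Subgraph

variable {X : G.Subgraph} {a b x y : V}

lemma support_sup (H H' : G.Subgraph) : (H ⊔ H').support = H.support ∪ H'.support := by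
  ext v
  simp only [mem_support, sup_adj, Set.mem_union, exists_or]

lemma support_sup_subgraphOfAdj (hxy : G.Adj x y) :
    (X ⊔ G.subgraphOfAdj hxy).support = X.support ∪ {x, y} := by
  rw [support_sup, support_subgraphOfAdj]

lemma IsMatching.sup_subgraphOfAdj (hX : X.IsMatching) (hx : x ∉ X.support)
    (hy : y ∉ X.support) (hxy : G.Adj x y) : (X ⊔ G.subgraphOfAdj hxy).IsMatching :=
  hX.sup (.subgraphOfAdj hxy) (by simp [Set.disjoint_insert_right, hx, hy])

lemma IsMatching.deleteVerts_pair (hX : X.IsMatching) (hab : X.Adj a b) :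
    (X.deleteVerts {a, b}).IsMatching := by
  rintro v ⟨hv, hvab⟩
  obtain ⟨w, hvw, hw⟩ := hX hv
  refine ⟨w, ?_, fun w' hw' => hw w' (deleteVerts_le.2 hw')⟩
  have hwab : w ∉ ({a, b} : Set V) := by
    rintro (rfl | rfl)
    · exact hvab (.inr (hX.eq_of_adj_left hvw.symm hab))
    · exact hvab (.inl (hX.eq_of_adj_right hvw hab))
  exact deleteVerts_adj.mpr ⟨hv, hvab, hvw.snd_mem, hwab, hvw⟩

lemma IsMatching.support_deleteVerts_pair (hX : X.IsMatching) (hab : X.Adj a b) :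
    (X.deleteVerts {a, b}).support = X.support \ {a, b} := by
  rw [(hX.deleteVerts_pair hab).support_eq_verts, deleteVerts_verts, hX.support_eq_verts]

lemma IsMatching.exists_swap (hX : X.IsMatching) {x u w : V} (hx : x ∉ X.support)
    (hxu : G.Adj x u) (huw : X.Adj u w) :
    ∃ Y : G.Subgraph, Y.IsMatching ∧ Y.support = insert x X.support \ {w} ∧
      ∀ v z, v ∉ ({x, u, w} : Set V) → z ∉ ({u, w} : Set V) → (Y.Adj v z ↔ X.Adj v z) := by
  have hu : u ∉ (X.deleteVerts {u, w}).support := by rw [hX.support_deleteVerts_pair huw]; simp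
  have hx' : x ∉ (X.deleteVerts {u, w}).support := fun h => hx (support_mono deleteVerts_le h)
  refine ⟨_, (hX.deleteVerts_pair huw).sup_subgraphOfAdj hx' hu hxu, ?_, fun v z hv hz => ?_⟩
  · have hxw : x ≠ w := fun h => hx (h ▸ ⟨u, huw.symm⟩)
    rw [support_sup_subgraphOfAdj, hX.support_deleteVerts_pair huw]
    ext v
    simp only [Set.mem_union, Set.mem_sdiff, Set.mem_insert_iff, Set.mem_singleton_iff]
    constructor
    · rintro (⟨hv, hv'⟩ | rfl | rfl)
      · exact ⟨.inr hv, fun h => hv' (.inr h)⟩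
      · exact ⟨.inl rfl, hxw⟩
      · exact ⟨.inr ⟨_, huw⟩, huw.adj_sub.ne⟩
    · rintro ⟨rfl | hv, hv'⟩
      · exact .inr (.inl rfl)
      · by_cases hvu : v = u
        · exact .inr (.inr hvu)
        · exact .inl ⟨hv, by tauto⟩
  · simp only [Set.mem_insert_iff, Set.mem_singleton_iff] at hv hz
    simp only [sup_adj, deleteVerts_adj, subgraphOfAdj_adj, Sym2.eq_iff, Set.mem_insert_iff,
      Set.mem_singleton_iff]
    exact ⟨by tauto, fun h => .inl ⟨h.fst_mem, by tauto, h.snd_mem, hz, h⟩⟩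

variable [Finite V]

lemma IsMatching.even_ncard_support (hX : X.IsMatching) : Even X.support.ncard := by
  have := Fintype.ofFinite X.verts
  rw [hX.support_eq_verts, Set.ncard_eq_toFinset_card']
  exact hX.even_card

lemma ncard_support_sup_subgraphOfAdj (hx : x ∉ X.support) (hy : y ∉ X.support)
    (hxy : G.Adj x y) : (X ⊔ G.subgraphOfAdj hxy).support.ncard = X.support.ncard + 2 := by
  rw [support_sup_subgraphOfAdj, Set.union_comm, Set.insert_union, Set.singleton_union,
    Set.ncard_insert_of_notMem (by simp [hx, hxy.ne]), Set.ncard_insert_of_notMem hy]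

lemma IsMatching.ncard_support_deleteVerts_pair (hX : X.IsMatching) (hab : X.Adj a b) :
    (X.deleteVerts {a, b}).support.ncard + 2 = X.support.ncard := by
  rw [hX.support_deleteVerts_pair hab, ← Set.ncard_pair hab.adj_sub.ne,
    Set.ncard_sdiff_add_ncard_of_subset (Set.insert_subset (show a ∈ X.support from ⟨_, hab⟩)
      (Set.singleton_subset_iff.mpr (show b ∈ X.support from ⟨_, hab.symm⟩)))]

end Subgraph

/-- Paths are encoded as functions `ℕ → V`, of which only the values `p 0, …, p n` matter. -/
structure IsAltPath (X : G.Subgraph) (n : ℕ) (p : ℕ → V) : Prop where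
  inj : ∀ i ≤ n, ∀ j ≤ n, p i = p j → i = j
  adj : ∀ i < n, G.Adj (p i) (p (i + 1))
  adj_iff_odd : ∀ i < n, X.Adj (p i) (p (i + 1)) ↔ Odd i

namespace IsAltPath

variable {X : G.Subgraph} {n : ℕ} {p : ℕ → V}

lemma mono (hp : IsAltPath X n p) {m : ℕ} (hm : m ≤ n) : IsAltPath X m p where
  inj i hi j hj := hp.inj i (hi.trans hm) j (hj.trans hm)
  adj i hi := hp.adj i (by omega)
  adj_iff_odd i hi := hp.adj_iff_odd i (by omega)

lemma snoc (hp : IsAltPath X n p) {z : V} (hz : ∀ i ≤ n, p i ≠ z) (hadj : G.Adj (p n) z)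
    (hX : X.Adj (p n) z ↔ Odd n) : IsAltPath X (n + 1) (Function.update p (n + 1) z) := by
  have hlow : ∀ i ≤ n, Function.update p (n + 1) z i = p i :=
    fun i hi => Function.update_of_ne (by omega) _ _
  refine ⟨fun i hi j hj hij => ?_, fun i hi => ?_, fun i hi => ?_⟩
  · rcases Nat.le_succ_iff.mp hi with hi | rfl <;> rcases Nat.le_succ_iff.mp hj with hj | rfl
    · rw [hlow i hi, hlow j hj] at hij
      exact hp.inj i hi j hj hij
    · rw [hlow i hi, Function.update_self] at hij
      exact absurd hij (hz i hi)
    · rw [hlow j hj, Function.update_self] at hij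
      exact absurd hij.symm (hz j hj)
    · rfl
  · rcases Nat.lt_succ_iff_lt_or_eq.mp hi with hi | rfl
    · rw [hlow i (by omega), hlow (i + 1) (by omega)]; exact hp.adj i hi
    · rw [hlow i le_rfl, Function.update_self]; exact hadj
  · rcases Nat.lt_succ_iff_lt_or_eq.mp hi with hi | rfl
    · rw [hlow i (by omega), hlow (i + 1) (by omega)]; exact hp.adj_iff_odd i hi
    · rw [hlow i le_rfl, Function.update_self]; exact hX

lemma reverse (hp : IsAltPath X n p) (hn : Even n) {Y : G.Subgraph}
    (hY : ∀ i < n, Y.Adj (p i) (p (i + 1)) ↔ Even i) : IsAltPath Y n (fun i => p (n - i)) := by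
  refine ⟨fun i hi j hj h => ?_, fun i hi => ?_, fun i hi => ?_⟩
  · have := hp.inj (n - i) (by omega) (n - j) (by omega) h; omega
  · have := hp.adj (n - (i + 1)) (by omega)
    rw [show n - (i + 1) + 1 = n - i by omega] at this
    exact this.symm
  · have := hY (n - (i + 1)) (by omega)
    rw [show n - (i + 1) + 1 = n - i by omega] at this
    rw [Subgraph.adj_comm, this]
    obtain ⟨m, rfl⟩ := hn
    constructor
    · rintro ⟨c, hc⟩; exact ⟨m - c - 1, by omega⟩
    · rintro ⟨c, hc⟩; exact ⟨m - c - 1, by omega⟩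

lemma length_lt_card [Finite V] (hp : IsAltPath X n p) : n < Nat.card V := by
  have := Nat.card_le_card_of_injective (fun i : Fin (n + 1) => p i)
    fun i j h => Fin.ext (hp.inj i (by omega) j (by omega) h)
  simpa using this

lemma mem_insert_support (hp : IsAltPath X n p) {m : ℕ} (hm : Even m) (hmn : m ≤ n) :
    p m ∈ insert (p 0) X.support := by
  obtain ⟨j, rfl⟩ := hm
  rcases j with _ | j
  · exact .inl rfl
  · refine .inr ⟨p (j + j + 1), (X.adj_comm _ _).mp ?_⟩
    have := (hp.adj_iff_odd (j + j + 1) (by omega)).mpr ⟨j, by ring⟩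
    rwa [show j + j + 1 + 1 = (j + 1) + (j + 1) by ring] at this

lemma exists_adj (hp : IsAltPath X n p) (hn : Even n) {j : ℕ} (hj : 0 < j) (hjn : j ≤ n) :
    ∃ i ≤ n, X.Adj (p j) (p i) ∧ (Even i ↔ ¬ Even j) := by
  rcases Nat.even_or_odd j with hje | hjo
  · have hodd : Odd (j - 1) := Nat.Even.sub_odd (by omega) hje odd_one
    have := (hp.adj_iff_odd (j - 1) (by omega)).mpr hodd
    rw [Nat.sub_add_cancel (Nat.one_le_iff_ne_zero.mpr hj.ne')] at this
    exact ⟨j - 1, by omega, this.symm, by simpa [hje] using hodd⟩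
  · have hjn' : j < n := lt_of_le_of_ne hjn fun h => (Nat.not_even_iff_odd.mpr hjo) (h ▸ hn)
    exact ⟨j + 1, hjn', (hp.adj_iff_odd j hjn').mpr hjo, by
      simp [Nat.even_add_one, Nat.not_even_iff_odd.mpr hjo]⟩

theorem exists_switch (hX : X.IsMatching) {k : ℕ} (hp : IsAltPath X (2 * k) p)
    (h0 : p 0 ∉ X.support) :
    ∃ Y : G.Subgraph, Y.IsMatching ∧ Y.support = insert (p 0) X.support \ {p (2 * k)} := by
  induction k generalizing X p with
  | zero => exact ⟨X, hX, by rw [Nat.mul_zero, Set.insert_sdiff_self_of_notMem h0]⟩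
  | succ k ih =>
    obtain ⟨X', hX', hsupp, hadj⟩ := hX.exists_swap h0 (hp.adj 0 (by omega))
      ((hp.adj_iff_odd 1 (by omega)).mpr odd_one)
    have hoff : ∀ j, 3 ≤ j → j ≤ 2 * k + 2 → p j ∉ ({p 0, p 1, p 2} : Set V) := by
      intro j hj3 hj
      simp only [Set.mem_insert_iff, Set.mem_singleton_iff]
      rintro (h | h | h) <;> have := hp.inj j hj _ (by omega) h <;> omega
    have htail : IsAltPath X' (2 * k) (fun i => p (i + 2)) := by
      refine ⟨fun i hi j hj h => ?_, fun i hi => hp.adj (i + 2) (by omega), fun i hi => ?_⟩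
      · have := hp.inj (i + 2) (by omega) (j + 2) (by omega) h; omega
      rcases Nat.eq_zero_or_pos i with rfl | hi0
      · refine iff_of_false (fun h => ?_) (by simp)
        have : p 2 ∈ X'.support := ⟨_, h⟩
        rw [hsupp] at this
        exact this.2 rfl
      · rw [hadj _ _ (hoff _ (by omega) (by omega)) fun h => hoff (i + 1 + 2) (by omega)
          (by omega) (.inr h), hp.adj_iff_odd (i + 2) (by omega)]
        simp [Nat.odd_add]
    obtain ⟨Y, hY, hYsupp⟩ := ih hX' htail (by rw [hsupp]; simp)
    refine ⟨Y, hY, ?_⟩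
    rw [hYsupp, hsupp, Nat.zero_add, Set.insert_sdiff_singleton,
      Set.insert_eq_of_mem (hp.mem_insert_support even_two (by omega)), Nat.mul_succ]

end IsAltPath

/-- In a walk whose edges come alternately from two matchings, the partner of the last vertex in
the matching due next is not on the walk. -/
lemma Subgraph.IsMatching.ne_of_adj_last {Q : G.Subgraph} (hQ : Q.IsMatching) {n : ℕ}
    {w : ℕ → V} (hinj : ∀ i ≤ n, ∀ j ≤ n, w i = w j → i = j)
    (hQw : ∀ i < n, (Even i ↔ Even n) → Q.Adj (w i) (w (i + 1)))
    (h0 : Odd n → w 0 ∉ Q.support) {z : V} (hz : Q.Adj (w n) z) : ∀ j ≤ n, w j ≠ z := by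
  rintro j hj rfl
  by_cases hpar : Even j ↔ Even n
  · have hjn : j < n := lt_of_le_of_ne hj fun h => hz.adj_sub.ne (by rw [h])
    obtain rfl := hinj (j + 1) hjn n le_rfl (hQ.eq_of_adj_left (hQw j hjn hpar) hz.symm)
    simp only [Nat.even_add_one] at hpar
    tauto
  · rcases Nat.eq_zero_or_pos j with rfl | hj0
    · exact h0 (Nat.not_even_iff_odd.mp fun h => hpar (iff_of_true .zero h)) ⟨_, hz.symm⟩
    · have hprev := hQw (j - 1) (by omega) (by simp only [Nat.even_iff] at hpar ⊢; omega)
      rw [Nat.sub_add_cancel hj0] at hprev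
      have := hinj (j - 1) (by omega) n le_rfl (hQ.eq_of_adj_left hprev.symm hz.symm)
      omega

/-- Starting at a vertex missed by `N`, follow edges of `J` and `N` alternately for as long as
possible. -/
theorem exists_alt_walk [Finite V] {J N : G.Subgraph} (hJ : J.IsMatching) (hN : N.IsMatching)
    {u : V} (hu : u ∉ N.support) :
    ∃ ℓ w, w 0 = u ∧ IsAltPath N ℓ w ∧ (∀ i < ℓ, Even i → J.Adj (w i) (w (i + 1))) ∧
      (Even ℓ → w ℓ ∉ J.support) ∧ (Odd ℓ → w ℓ ∉ N.support) := by
  set S := {ℓ | ∃ w : ℕ → V, w 0 = u ∧ IsAltPath N ℓ w ∧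
    ∀ i < ℓ, Even i → J.Adj (w i) (w (i + 1))}
  have h0S : 0 ∈ S := ⟨fun _ => u, rfl, ⟨fun _ _ _ _ _ => by omega, fun _ h => by omega,
    fun _ h => by omega⟩, fun _ h => by omega⟩
  have hbdd : BddAbove S := ⟨Nat.card V, fun ℓ ⟨_, _, hw, _⟩ => hw.length_lt_card.le⟩
  obtain ⟨w, hw0, hw, hwJ⟩ := Nat.sSup_mem ⟨0, h0S⟩ hbdd
  set ℓ := sSup S
  have hext : ∀ z, (∀ j ≤ ℓ, w j ≠ z) → G.Adj (w ℓ) z → (N.Adj (w ℓ) z ↔ Odd ℓ) →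
      (Even ℓ → J.Adj (w ℓ) z) → False := fun z hnew hadj hN hJ => by
    have hlow : ∀ i ≤ ℓ, Function.update w (ℓ + 1) z i = w i :=
      fun i hi => Function.update_of_ne (by omega) _ _
    refine absurd (le_csSup hbdd ⟨_, by rw [hlow 0 (by omega), hw0], hw.snoc hnew hadj hN,
      fun i hi hi' => ?_⟩) (by omega)
    rcases Nat.lt_succ_iff_lt_or_eq.mp hi with hi | rfl
    · rw [hlow i (by omega), hlow (i + 1) (by omega)]; exact hwJ i hi hi'
    · rw [hlow ℓ le_rfl, Function.update_self]; exact hJ hi'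
  refine ⟨ℓ, w, hw0, hw, hwJ, fun hℓ ⟨z, hz⟩ => ?_, fun hℓ ⟨z, hz⟩ => ?_⟩
  · have hnew := hJ.ne_of_adj_last hw.inj (fun i hi hpar => hwJ i hi (hpar.mpr hℓ))
      (fun h => absurd hℓ (Nat.not_even_iff_odd.mpr h)) hz
    have hNz : ¬ N.Adj (w ℓ) z := by
      rcases Nat.eq_zero_or_pos ℓ with h | h
      · rw [h, hw0]; exact fun h' => hu ⟨_, h'⟩
      · have hN' := (hw.adj_iff_odd (ℓ - 1) (by omega)).mpr (Nat.Even.sub_odd h hℓ odd_one)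
        rw [Nat.sub_add_cancel h] at hN'
        exact hN.not_adj_left_of_ne (hnew (ℓ - 1) (by omega)) hN'.symm
    exact hext z hnew hz.adj_sub (iff_of_false hNz (Nat.not_odd_iff_even.mpr hℓ)) fun _ => hz
  · have hnew := hN.ne_of_adj_last hw.inj
      (fun i hi hpar => (hw.adj_iff_odd i hi).mpr (by
        simpa [Nat.not_even_iff_odd.mpr hℓ] using hpar))
      (fun _ => hw0 ▸ hu) hz
    exact hext z hnew hz.adj_sub (iff_of_true hz hℓ)
      fun h => absurd h (Nat.not_even_iff_odd.mpr hℓ)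

/-- A maximum matching of `G - F`, regarded as a subgraph of `G`. -/
structure IsMaxAvoiding (G : SimpleGraph V) (F : Set V) (X : G.Subgraph) : Prop where
  isMatching : X.IsMatching
  disjoint : Disjoint X.support F
  le : ∀ Y : G.Subgraph, Y.IsMatching → Disjoint Y.support F → Y.support.ncard ≤ X.support.ncard

lemma isMaxAvoiding_empty_iff {M : G.Subgraph} : IsMaxAvoiding G ∅ M ↔ IsMaxMatching G M :=
  ⟨fun h => ⟨h.isMatching, fun N hN => h.le N hN (Set.disjoint_empty _)⟩,
    fun h => ⟨h.1, Set.disjoint_empty _, fun N hN _ => h.2 N hN⟩⟩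

/-- `D(G - F)`, computed inside `G`. -/
def DsetAvoiding (G : SimpleGraph V) (F : Set V) : Set V :=
  {v | v ∉ F ∧ ∃ X, IsMaxAvoiding G F X ∧ v ∉ X.support}

lemma dsetAvoiding_empty : DsetAvoiding G ∅ = Dset G := by
  ext v
  simp [DsetAvoiding, Dset, isMaxAvoiding_empty_iff]

namespace IsMaxAvoiding

variable {F : Set V} {X Y J N : G.Subgraph} {n : ℕ} {p : ℕ → V}

lemma of_le_ncard (hX : IsMaxAvoiding G F X) (hY : Y.IsMatching) (hYF : Disjoint Y.support F)
    (h : X.support.ncard ≤ Y.support.ncard) : IsMaxAvoiding G F Y :=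
  ⟨hY, hYF, fun Z hZ hZF => (hX.le Z hZ hZF).trans h⟩

lemma ncard_eq (hX : IsMaxAvoiding G F X) (hY : IsMaxAvoiding G F Y) :
    X.support.ncard = Y.support.ncard :=
  le_antisymm (hY.le X hX.isMatching hX.disjoint) (hX.le Y hY.isMatching hY.disjoint)

lemma mem_support (hX : IsMaxAvoiding G F X) {v : V} (hvF : v ∉ F)
    (hv : v ∉ DsetAvoiding G F) : v ∈ X.support :=
  by_contra fun h => hv ⟨hvF, X, hX, h⟩

variable [Finite V]

lemma not_adj (hX : IsMaxAvoiding G F X) {x y : V} (hx : x ∉ X.support) (hy : y ∉ X.support)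
    (hxF : x ∉ F) (hyF : y ∉ F) : ¬ G.Adj x y := fun hxy => by
  have := hX.le _ (hX.isMatching.sup_subgraphOfAdj hx hy hxy) (by
    rw [Subgraph.support_sup_subgraphOfAdj]
    simp [Set.disjoint_insert_left, hX.disjoint, hxF, hyF])
  rw [Subgraph.ncard_support_sup_subgraphOfAdj hx hy hxy] at this
  omega

lemma sup_subgraphOfAdj (hN : IsMaxAvoiding G F N) (hJ : J.IsMatching)
    (hJF : Disjoint J.support F) (hsize : J.support.ncard + 2 = N.support.ncard) {x y : V}
    (hx : x ∉ J.support) (hy : y ∉ J.support) (hxF : x ∉ F) (hyF : y ∉ F) (hxy : G.Adj x y) :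
    IsMaxAvoiding G F (J ⊔ G.subgraphOfAdj hxy) := by
  refine hN.of_le_ncard (hJ.sup_subgraphOfAdj hx hy hxy) ?_ ?_
  · rw [Subgraph.support_sup_subgraphOfAdj]
    simp [Set.disjoint_insert_left, hJF, hxF, hyF]
  · rw [Subgraph.ncard_support_sup_subgraphOfAdj hx hy hxy, hsize]

lemma exists_switch (hX : IsMaxAvoiding G F X) {k : ℕ} (hp : IsAltPath X (2 * k) p)
    (h0 : p 0 ∉ X.support) (h0F : p 0 ∉ F) :
    ∃ Y, IsMaxAvoiding G F Y ∧ Y.support = insert (p 0) X.support \ {p (2 * k)} := by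
  obtain ⟨Y, hY, hsupp⟩ := hp.exists_switch hX.isMatching h0
  refine ⟨Y, hX.of_le_ncard hY ?_ ?_, hsupp⟩
  · rw [hsupp]
    exact (Set.disjoint_insert_left.mpr ⟨h0F, hX.disjoint⟩).mono_left Set.sdiff_subset
  · rw [hsupp,
      Set.ncard_insert_sdiff_singleton h0 (hp.mem_insert_support (even_two_mul k) le_rfl)]

lemma mem_dsetAvoiding (hX : IsMaxAvoiding G F X) (hp : IsAltPath X n p)
    (h0 : p 0 ∉ X.support) (h0F : p 0 ∉ F) {m : ℕ} (hm : Even m) (hmn : m ≤ n) :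
    p m ∈ DsetAvoiding G F := by
  obtain ⟨j, rfl⟩ := hm
  rw [← two_mul] at hmn ⊢
  obtain ⟨Y, hY, hsupp⟩ := hX.exists_switch (hp.mono hmn) h0 h0F
  refine ⟨fun h => ?_, Y, hY, by simp [hsupp]⟩
  rcases hp.mem_insert_support (even_two_mul j) hmn with h' | h'
  · exact h0F (h' ▸ h)
  · exact Set.disjoint_left.mp hX.disjoint h' h

lemma not_isAltPath_odd (hX : IsMaxAvoiding G F X) (hp : IsAltPath X n p) (hn : Odd n)
    (h0 : p 0 ∉ X.support) (hn' : p n ∉ X.support) (h0F : p 0 ∉ F) (hnF : p n ∉ F) : False := by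
  obtain ⟨k, rfl⟩ := hn
  obtain ⟨Y, hY, hsupp⟩ := hX.exists_switch (hp.mono (Nat.le_succ _)) h0 h0F
  have hF := hX.mem_dsetAvoiding hp h0 h0F (even_two_mul k) (Nat.le_succ _)
  refine hY.not_adj (by simp [hsupp]) ?_ hF.1 hnF (hp.adj (2 * k) (by omega))
  rw [hsupp]
  rintro ⟨h | h, -⟩
  · exact absurd (hp.inj _ le_rfl 0 (by omega) h) (by omega)
  · exact hn' h

/-- An alternating walk from a vertex missed by the maximum matching `N` cannot end at a vertex
missed by `N` (it would be augmenting), so it ends, after an even number of steps, at a vertex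
missed by `J`. -/
theorem exists_even_alt_walk (hN : IsMaxAvoiding G F N) (hJ : J.IsMatching)
    (hJF : Disjoint J.support F) {u : V} (hu : u ∉ N.support) (huF : u ∉ F) :
    ∃ k w, w 0 = u ∧ IsAltPath N (2 * k) w ∧ IsAltPath J (2 * k) (fun i => w (2 * k - i)) ∧
      w (2 * k) ∉ J.support ∧ w (2 * k) ∉ F := by
  obtain ⟨ℓ, w, hw0, hw, hwJ, hendJ, hendN⟩ := exists_alt_walk hJ hN.isMatching hu
  have hwF : w ℓ ∉ F := by
    rcases Nat.eq_zero_or_pos ℓ with h | h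
    · rwa [h, hw0]
    have hJ' := hwJ (ℓ - 1) (by omega)
    have hN' := (hw.adj_iff_odd (ℓ - 1) (by omega)).mpr
    rw [Nat.sub_add_cancel h] at hJ' hN'
    rcases Nat.even_or_odd (ℓ - 1) with hpar | hpar
    · exact Set.disjoint_left.mp hJF ⟨_, (hJ' hpar).symm⟩
    · exact Set.disjoint_left.mp hN.disjoint ⟨_, (hN' hpar).symm⟩
  rcases Nat.even_or_odd ℓ with ⟨k, hk⟩ | hodd
  · rw [← two_mul] at hk
    subst hk
    refine ⟨k, w, hw0, hw, hw.reverse (even_two_mul k) fun i hi => ⟨fun hJi => ?_, hwJ i hi⟩,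
      hendJ (even_two_mul k), hwF⟩
    by_contra hi
    have hi0 : 0 < i := Nat.pos_of_ne_zero fun h => hi (h ▸ .zero)
    have hprev := hwJ (i - 1) (by omega) (by simp only [Nat.even_iff] at hi ⊢; omega)
    rw [Nat.sub_add_cancel hi0] at hprev
    have := hw.inj (i - 1) (by omega) (i + 1) (by omega) (hJ.eq_of_adj_left hprev.symm hJi)
    omega
  · exact (hN.not_isAltPath_odd hw hodd (hw0 ▸ hu) (hendN hodd) (hw0 ▸ huF) hwF).elim

theorem exists_isAltPath_to (hX : IsMaxAvoiding G F X) {v : V} (hv : v ∈ DsetAvoiding G F) :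
    ∃ k p, IsAltPath X (2 * k) p ∧ p 0 ∉ X.support ∧ p 0 ∉ F ∧ p (2 * k) = v := by
  obtain ⟨hvF, N, hN, hvN⟩ := hv
  obtain ⟨k, w, hw0, -, hrev, hend, hendF⟩ :=
    hN.exists_even_alt_walk hX.isMatching hX.disjoint hvN hvF
  exact ⟨k, _, hrev, by simpa using hend, by simpa using hendF, by simpa using hw0⟩

theorem deleteVerts_pair (hX : IsMaxAvoiding G F X) {a b : V} (haD : a ∉ DsetAvoiding G F)
    (haF : a ∉ F) (hab : X.Adj a b) : IsMaxAvoiding G (insert a F) (X.deleteVerts {a, b}) := by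
  have hsize := hX.isMatching.ncard_support_deleteVerts_pair hab
  refine ⟨hX.isMatching.deleteVerts_pair hab, ?_, fun Z hZ hZF => ?_⟩
  · rw [hX.isMatching.support_deleteVerts_pair hab, Set.disjoint_insert_right]
    exact ⟨by simp, hX.disjoint.mono_left Set.sdiff_subset⟩
  · have hle := hX.le Z hZ (hZF.mono_right (Set.subset_insert a F))
    have hne : Z.support.ncard ≠ X.support.ncard := fun h =>
      haD ⟨haF, Z, hX.of_le_ncard hZ (hZF.mono_right (Set.subset_insert a F)) h.ge,
        Set.disjoint_right.mp hZF (Set.mem_insert a F)⟩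
    obtain ⟨z, hz⟩ := hZ.even_ncard_support
    obtain ⟨x, hx⟩ := hX.isMatching.even_ncard_support
    omega

end IsMaxAvoiding

def IsDeficient (X : G.Subgraph) (v : V) : Prop :=
  ∀ w, X.Adj v w → w ∉ Dset G

lemma isDeficient_iff {X : G.Subgraph} {c : (G.induce (Dset G)).ConnectedComponent}
    {w : Dset G} (hw : (G.induce (Dset G)).connectedComponentMk w = c) :
    IsDeficient X w ↔
      ¬ ∃ u : Dset G, (G.induce (Dset G)).connectedComponentMk u = c ∧ X.Adj w u :=
  ⟨fun h ⟨u, _, hwu⟩ => h u hwu u.2, fun h u hwu huD =>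
    h ⟨⟨u, huD⟩, (connectedComponentMk_induce_eq_of_adj hwu.adj_sub.symm).trans hw, hwu⟩⟩

lemma Subgraph.IsMatching.isDeficient_of_adj {M : G.Subgraph} (hM : M.IsMatching) {a d : V}
    (ha : a ∈ Aset G) (had : M.Adj a d) : IsDeficient M d := fun _ hdw =>
  hM.eq_of_adj_left had.symm hdw ▸ ha.1

variable [Finite V] {F : Set V} {a : V}

theorem dsetAvoiding_insert_subset (hF : DsetAvoiding G F = Dset G) (ha : a ∈ Aset G)
    (haF : a ∉ F) : DsetAvoiding G (insert a F) ⊆ Dset G := by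
  have haD : a ∉ DsetAvoiding G F := hF ▸ ha.1
  rintro v ⟨hvF, J, hJ, hvJ⟩
  rw [Set.mem_insert_iff, not_or] at hvF
  by_contra hvD
  obtain ⟨u, huD, hau⟩ := ha.2
  obtain ⟨huF, N, hN, huN⟩ : u ∈ DsetAvoiding G F := hF ▸ huD
  obtain ⟨b, hab⟩ := hN.mem_support haF haD
  have hJF := hJ.disjoint.mono_right (Set.subset_insert a F)
  obtain ⟨k, w, hw0, hwN, hwJ, hqJ, hqF⟩ := hN.exists_even_alt_walk hJ.isMatching hJF huN huF
  by_cases hq : w (2 * k) = a ∨ w (2 * k) = v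
  · -- switching `N` along the walk would put `w (2 * k)` into `D(G)`
    obtain ⟨N', hN', hsupp⟩ := hN.exists_switch hwN (hw0 ▸ huN) (hw0 ▸ huF)
    have hqD : w (2 * k) ∈ Dset G := hF ▸ ⟨hqF, N', hN', by simp [hsupp]⟩
    rcases hq with h | h
    · exact ha.1 (h ▸ hqD)
    · exact hvD (h ▸ hqD)
  -- switching `J` along the walk frees `u`, and then the edge `a u` can be added
  rw [not_or] at hq
  obtain ⟨J', hJ', hsupp⟩ := hwJ.exists_switch hJ.isMatching (by simpa using hqJ)
  simp only [Nat.sub_zero, Nat.sub_self, hw0] at hsupp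
  have hJ'F : Disjoint J'.support F := hsupp ▸
    (Set.disjoint_insert_left.mpr ⟨hqF, hJF⟩).mono_left Set.sdiff_subset
  have hJ'size : J'.support.ncard + 2 = N.support.ncard := by
    rw [hsupp, Set.ncard_insert_sdiff_singleton (by simpa using hqJ)
      (by simpa [hw0] using hwJ.mem_insert_support (even_two_mul k) le_rfl),
      hJ.ncard_eq (hN.deleteVerts_pair haD haF hab),
      hN.isMatching.ncard_support_deleteVerts_pair hab]
  have hmiss : ∀ x ∉ J.support, x ≠ w (2 * k) → x ∉ J'.support := fun x hx hxq => by
    rw [hsupp]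
    rintro ⟨h | h, -⟩
    exacts [hxq h, hx h]
  have haJ' : a ∉ J'.support :=
    hmiss a (Set.disjoint_left.mp hJ.disjoint · (Set.mem_insert a F)) (Ne.symm hq.1)
  have huJ' : u ∉ J'.support := by simp [hsupp]
  refine hvD (hF ▸ ⟨hvF.2, _, hN.sup_subgraphOfAdj hJ' hJ'F hJ'size haJ' huJ' haF huF hau, ?_⟩)
  rw [Subgraph.support_sup_subgraphOfAdj]
  rintro (h | h | h)
  · exact hmiss v hvJ (Ne.symm hq.2) h
  · exact hvF.1 h
  · exact hvD (h ▸ huD)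

theorem dsetAvoiding_insert (hF : DsetAvoiding G F = Dset G) (ha : a ∈ Aset G) (haF : a ∉ F) :
    DsetAvoiding G (insert a F) = Dset G := by
  refine (dsetAvoiding_insert_subset hF ha haF).antisymm fun v hvD => ?_
  have haD : a ∉ DsetAvoiding G F := hF ▸ ha.1
  obtain ⟨hvF, N, hN, hvN⟩ : v ∈ DsetAvoiding G F := hF ▸ hvD
  obtain ⟨b, hab⟩ := hN.mem_support haF haD
  refine ⟨?_, _, hN.deleteVerts_pair haD haF hab,
    fun h => hvN (Subgraph.support_mono Subgraph.deleteVerts_le h)⟩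
  rintro (rfl | h)
  · exact ha.1 hvD
  · exact hvF h

theorem dsetAvoiding_eq_of_subset (hF : F ⊆ Aset G) : DsetAvoiding G F = Dset G := by
  induction F, F.toFinite using Set.Finite.induction_on with
  | empty => exact dsetAvoiding_empty
  | @insert a F haF _ ih =>
    exact dsetAvoiding_insert (ih ((Set.subset_insert a F).trans hF)) (hF (Set.mem_insert a F))
      haF

theorem IsMaxAvoiding.not_reachable {X : G.Subgraph} (hX : IsMaxAvoiding G (Aset G) X)
    {x y : Dset G} (hxy : x ≠ y) (hx : (x : V) ∉ X.support) (hy : (y : V) ∉ X.support) :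
    ¬ (G.induce (Dset G)).Reachable x y := by
  have hDA : DsetAvoiding G (Aset G) = Dset G := dsetAvoiding_eq_of_subset subset_rfl
  have hnA : ∀ v : Dset G, (v : V) ∉ Aset G := fun v h => h.1 v.2
  rintro ⟨W⟩
  induction W generalizing X with
  | nil => exact hxy rfl
  | @cons x t y hxt W ih =>
    by_cases htX : (t : V) ∈ X.support
    · -- move the hole of `X` from `p 0` to `t`: it either leaves `x` or lands next to `x`
      obtain ⟨k, p, hp, hp0, hp0A, hpt⟩ := hX.exists_isAltPath_to (v := t) (hDA.symm ▸ t.2)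
      obtain ⟨X', hX', hsupp⟩ := hX.exists_switch hp hp0 hp0A
      rw [hpt] at hsupp
      have htX' : (t : V) ∉ X'.support := by simp [hsupp]
      by_cases hq : p 0 = x
      · refine ih hX' (fun h => hy (h ▸ htX)) htX' ?_
        rw [hsupp]
        rintro ⟨h | h, -⟩
        · exact hxy (Subtype.ext (h.trans hq).symm)
        · exact hy h
      · refine hX'.not_adj ?_ htX' (hnA x) (hnA t) hxt
        rw [hsupp]
        rintro ⟨h | h, -⟩
        · exact hq h.symm
        · exact hx h
    · by_cases hty : t = y
      · subst hty
        exact hX.not_adj hx htX (hnA x) (hnA t) hxt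
      · exact ih hX hty htX hy

theorem IsMaxAvoiding.eq_of_isDeficient (hFA : F ⊆ Aset G) {X : G.Subgraph}
    (hX : IsMaxAvoiding G F X) {x y : Dset G} (hx : IsDeficient X x) (hy : IsDeficient X y)
    (hxy : (G.induce (Dset G)).Reachable x y) : x = y := by
  induction hn : (Aset G \ F).ncard generalizing F X with
  | zero =>
    obtain rfl : F = Aset G :=
      hFA.antisymm (Set.sdiff_eq_empty.mp ((Set.ncard_eq_zero).mp hn))
    -- a vertex of `D` matched outside `D` is matched into `A`, which `X` avoids
    have hexp : ∀ v : Dset G, IsDeficient X v → (v : V) ∉ X.support := fun v hv ⟨w, hvw⟩ =>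
      Set.disjoint_right.mp hX.disjoint ⟨hv w hvw, v, v.2, hvw.adj_sub.symm⟩ ⟨v, hvw.symm⟩
    by_contra hne
    exact hX.not_reachable hne (hexp x hx) (hexp y hy) hxy
  | succ n ih =>
    obtain ⟨a, haA, haF⟩ : (Aset G \ F).Nonempty := Set.nonempty_of_ncard_ne_zero (by omega)
    have haD : a ∉ DsetAvoiding G F := dsetAvoiding_eq_of_subset hFA ▸ haA.1
    obtain ⟨b, hab⟩ := hX.mem_support haF haD
    refine ih (Set.insert_subset haA hFA) (hX.deleteVerts_pair haD haF hab)
      (fun w hw => hx w (Subgraph.deleteVerts_le.2 hw))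
      (fun w hw => hy w (Subgraph.deleteVerts_le.2 hw)) ?_
    rw [Set.insert_eq, Set.union_comm, ← Set.sdiff_sdiff,
      Set.ncard_sdiff_singleton_of_mem (Set.mem_sdiff_of_mem haA haF), hn, Nat.add_sub_cancel]

end SimpleGraph

namespace IsMaxMatching

open SimpleGraph

variable {V : Type*} {G : SimpleGraph V} {M : G.Subgraph}

lemma mem_support (hM : IsMaxMatching G M) {v : V} (hv : v ∉ Dset G) : v ∈ M.support :=
  by_contra fun h => hv ⟨M, hM, h⟩

variable [Finite V]

lemma mem_dset_of_isAltPath (hM : IsMaxMatching G M) {n : ℕ} {p : ℕ → V}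
    (hp : IsAltPath M n p) (h0 : p 0 ∉ M.support) {m : ℕ} (hm : Even m) (hmn : m ≤ n) :
    p m ∈ Dset G :=
  dsetAvoiding_empty ▸
    (isMaxAvoiding_empty_iff.mpr hM).mem_dsetAvoiding hp h0 (Set.notMem_empty _) hm hmn

lemma exists_isAltPath_to (hM : IsMaxMatching G M) {v : V} (hv : v ∈ Dset G) :
    ∃ k p, IsAltPath M (2 * k) p ∧ p 0 ∉ M.support ∧ p (2 * k) = v := by
  obtain ⟨k, p, hp, hp0, -, hpv⟩ :=
    (isMaxAvoiding_empty_iff.mpr hM).exists_isAltPath_to (dsetAvoiding_empty.symm ▸ hv)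
  exact ⟨k, p, hp, hp0, hpv⟩

theorem mem_dset_of_adj (hM : IsMaxMatching G M) {a b : V} (ha : a ∈ Aset G)
    (hab : M.Adj a b) : b ∈ Dset G := by
  obtain ⟨d, hdD, had⟩ := ha.2
  obtain ⟨k, p, hp, hp0, hpd⟩ := hM.exists_isAltPath_to hdD
  have hpos : ∀ {j v w}, p j = v → M.Adj v w → 0 < j := fun hj hvw =>
    Nat.pos_of_ne_zero fun h => hp0 (h ▸ hj ▸ ⟨_, hvw⟩)
  by_cases hpa : ∃ j ≤ 2 * k, p j = a
  · obtain ⟨j, hj, hja⟩ := hpa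
    obtain ⟨i, hi, hadj, hpar⟩ := hp.exists_adj (even_two_mul k) (hpos hja hab) hj
    rcases Nat.even_or_odd j with hje | hjo
    · exact absurd (hja ▸ hM.mem_dset_of_isAltPath hp hp0 hje hj) ha.1
    · rw [hM.1.eq_of_adj_left hab (hja ▸ hadj)]
      exact hM.mem_dset_of_isAltPath hp hp0 (hpar.mpr (Nat.not_even_iff_odd.mpr hjo)) hi
  -- otherwise the path extends by the edges `d a` and `a b`
  simp only [not_exists, not_and] at hpa
  have hpb : ∀ j ≤ 2 * k, p j ≠ b := fun j hj hjb => by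
    obtain ⟨i, hi, hadj, -⟩ := hp.exists_adj (even_two_mul k) (hpos hjb hab.symm) hj
    exact hpa i hi (hM.1.eq_of_adj_left (hjb ▸ hadj) hab.symm)
  have hda : ¬ M.Adj (p (2 * k)) a := fun h => hpb _ le_rfl (hM.1.eq_of_adj_left h.symm hab)
  have hp₁ := hp.snoc hpa (hpd ▸ had.symm) (iff_of_false hda (by simp))
  have hp₂ := hp₁.snoc (z := b) (fun i hi => by
      rcases Nat.le_succ_iff.mp hi with hi | rfl
      · rw [Function.update_of_ne (by omega)]; exact hpb i hi
      · rw [Function.update_self]; exact hab.adj_sub.ne)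
    (by simpa using hab.adj_sub) (iff_of_true (by simpa using hab) ⟨k, rfl⟩)
  have h0 : Function.update (Function.update p (2 * k + 1) a) (2 * k + 1 + 1) b 0 = p 0 := by
    simp
  simpa using hM.mem_dset_of_isAltPath hp₂ (h0 ▸ hp0) (m := 2 * k + 1 + 1) ⟨k + 1, by ring⟩ le_rfl

theorem exists_adj_mem_cset (hM : IsMaxMatching G M) {w : V} (hw : w ∈ Cset G) :
    ∃ u ∈ Cset G, M.Adj w u := by
  obtain ⟨u, hwu⟩ := hM.mem_support hw.1
  exact ⟨u, ⟨fun huD => hw.2 ⟨hw.1, u, huD, hwu.adj_sub⟩,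
    fun huA => hw.1 (hM.mem_dset_of_adj huA hwu.symm)⟩, hwu⟩

theorem eq_of_isDeficient (hM : IsMaxMatching G M) {x y : Dset G} (hx : IsDeficient M x)
    (hy : IsDeficient M y) (hxy : (G.induce (Dset G)).Reachable x y) : x = y :=
  (isMaxAvoiding_empty_iff.mpr hM).eq_of_isDeficient (Set.empty_subset _) hx hy hxy

theorem exists_isDeficient (hM : IsMaxMatching G M)
    (c : (G.induce (Dset G)).ConnectedComponent) :
    ∃ d : Dset G, (G.induce (Dset G)).connectedComponentMk d = c ∧ IsDeficient M d := by
  obtain ⟨x, rfl⟩ := c.exists_rep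
  obtain ⟨k, p, hp, hp0, hpx⟩ := hM.exists_isAltPath_to x.2
  have hD : ∀ i ≤ k, p (2 * i) ∈ Dset G := fun i hi =>
    hM.mem_dset_of_isAltPath hp hp0 (even_two_mul i) (by omega)
  have hpx' : (⟨p (2 * k), hD k le_rfl⟩ : Dset G) = x := Subtype.ext hpx
  -- walking back along the path, stop at the first vertex not matched into `D(G)`
  suffices ∀ i (hi : i ≤ k), ∃ d : Dset G, (G.induce (Dset G)).connectedComponentMk d =
      (G.induce (Dset G)).connectedComponentMk ⟨p (2 * i), hD i hi⟩ ∧ IsDeficient M d by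
    obtain ⟨d, hd, hdef⟩ := this k le_rfl
    exact ⟨d, hd.trans (congrArg _ hpx'), hdef⟩
  intro i hi
  induction i with
  | zero => exact ⟨_, rfl, fun w hw => (hp0 ⟨w, hw⟩).elim⟩
  | succ i ih =>
    by_cases hdef : IsDeficient M (p (2 * (i + 1)))
    · exact ⟨_, rfl, hdef⟩
    simp only [IsDeficient, not_forall, not_not] at hdef
    obtain ⟨w, hw, hwD⟩ := hdef
    have hprev : M.Adj (p (2 * i + 1)) (p (2 * (i + 1))) :=
      (hp.adj_iff_odd (2 * i + 1) (by omega)).mpr ⟨i, rfl⟩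
    obtain rfl := hM.1.eq_of_adj_left hw hprev.symm
    obtain ⟨d, hd, hdef⟩ := ih (by omega)
    refine ⟨d, hd.trans ?_, hdef⟩
    exact (connectedComponentMk_induce_eq_of_adj (u := ⟨_, hD i (by omega)⟩) (v := ⟨_, hwD⟩)
      (hp.adj (2 * i) (by omega))).trans
      (connectedComponentMk_induce_eq_of_adj (v := ⟨_, hD (i + 1) hi⟩) hprev.adj_sub)

end IsMaxMatching

/-- Edmonds–Gallai: every maximum matching `M` contains a near-perfect matching of
each component of `G[D(G)]` (exactly one vertex of the component is not matched
within it), a perfect matching of each component of `G[C(G)]` (every vertex is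
matched within its component), and matches every vertex of `A(G)` to a vertex of
`D(G)`, with distinct `A(G)`-vertices matched into distinct components of `G[D(G)]`. -/
theorem stmt5 {V : Type*} [Fintype V] (G : SimpleGraph V)
    (M : G.Subgraph) (hM : IsMaxMatching G M) :
    (∀ c : (G.induce (Dset G)).ConnectedComponent,
      ({w : Dset G | (G.induce (Dset G)).connectedComponentMk w = c ∧
        ¬ ∃ u : Dset G, (G.induce (Dset G)).connectedComponentMk u = c ∧
          M.Adj ↑w ↑u}).ncard = 1) ∧
    (∀ w : Cset G, ∃ u : Cset G,
      (G.induce (Cset G)).connectedComponentMk u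
        = (G.induce (Cset G)).connectedComponentMk w ∧ M.Adj ↑w ↑u) ∧
    (∀ a ∈ Aset G, (∃ d ∈ Dset G, M.Adj a d) ∧ (∀ u : V, M.Adj a u → u ∈ Dset G)) ∧
    (∀ a a' : V, a ∈ Aset G → a' ∈ Aset G → a ≠ a' →
      ∀ d d' : Dset G, M.Adj a ↑d → M.Adj a' ↑d' →
        (G.induce (Dset G)).connectedComponentMk d ≠
          (G.induce (Dset G)).connectedComponentMk d') := by
  refine ⟨fun c => ?_, fun w => ?_, fun a ha => ?_, ?_⟩
  · obtain ⟨d, hdc, hd⟩ := hM.exists_isDeficient c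
    refine Set.ncard_eq_one.mpr ⟨d, Set.ext fun w => ⟨fun ⟨hwc, hw⟩ => ?_, ?_⟩⟩
    · exact hM.eq_of_isDeficient ((SimpleGraph.isDeficient_iff hwc).mpr hw) hd
        (SimpleGraph.ConnectedComponent.exact (hwc.trans hdc.symm))
    · rintro rfl
      exact ⟨hdc, (SimpleGraph.isDeficient_iff hdc).mp hd⟩
  · obtain ⟨u, huC, hwu⟩ := hM.exists_adj_mem_cset w.2
    exact ⟨⟨u, huC⟩, SimpleGraph.connectedComponentMk_induce_eq_of_adj hwu.adj_sub.symm, hwu⟩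
  · obtain ⟨d, had⟩ := hM.mem_support ha.1
    exact ⟨⟨d, hM.mem_dset_of_adj ha had, had⟩, fun u hau => hM.mem_dset_of_adj ha hau⟩
  · intro a a' ha ha' haa' d d' had had' hdd'
    have hdd := hM.eq_of_isDeficient (hM.1.isDeficient_of_adj ha had)
      (hM.1.isDeficient_of_adj ha' had') (SimpleGraph.ConnectedComponent.exact hdd')
    exact haa' (hM.1.eq_of_adj_right had (hdd ▸ had'))
end

section
/- If G = (V,E) is a graph with Edmonds–Gallai decomposition D(G), A(G), C(G), then the maximum matching size of G equals (|V| − c(D(G)) + |A(G)|)/2, where c(D(G)) is the number of connected components of the subgraph induced by D(G). -/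
section EdmondsGallai

open SimpleGraph Set

variable {V : Type*}

namespace SimpleGraph

theorem Connected.two_mul_card_le_sum_ncard_neighborSet {W : Type*} [Fintype W]
    {C : SimpleGraph W} (hC : C.Connected) :
    2 * Fintype.card W ≤ ∑ x, (C.neighborSet x).ncard + 2 := by
  classical
  have hedges := hC.card_vert_le_card_edgeSet_add_one
  have hsum := C.sum_degrees_eq_twice_card_edges
  simp only [← card_neighborSet_eq_degree, ← Nat.card_eq_fintype_card,
    Nat.card_coe_set_eq] at hsum
  rw [Nat.card_eq_fintype_card, Nat.card_eq_fintype_card, ← edgeFinset_card] at hedges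
  omega

theorem Walk.support_subset_of_closed {H : SimpleGraph V} {S : Set V}
    (hS : ∀ ⦃v w⦄, H.Adj v w → v ∈ S → w ∈ S) {u v : V} (p : H.Walk u v) (hu : u ∈ S) :
    ∀ x ∈ p.support, x ∈ S := by
  induction p with
  | nil => simpa using hu
  | cons h p ih =>
    intro x hx
    rw [Walk.support_cons, List.mem_cons] at hx
    rcases hx with rfl | hx
    exacts [hu, ih (hS h hu) x hx]

theorem Reachable.induce_of_closed {H : SimpleGraph V} {S : Set V}
    (hS : ∀ ⦃v w⦄, H.Adj v w → v ∈ S → w ∈ S) {u v : V} (h : H.Reachable u v)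
    (hu : u ∈ S) (hv : v ∈ S) : (H.induce S).Reachable ⟨u, hu⟩ ⟨v, hv⟩ := by
  obtain ⟨p⟩ := h
  exact ⟨p.induce S (p.support_subset_of_closed hS hu)⟩

theorem Reachable.of_induce_insert {H : SimpleGraph V} {s : Set V} {a : V} (has : a ∉ s)
    (ha : ∀ v, ¬ H.Adj a v) {u v : V} (hu : u ∈ s) (hv : v ∈ insert a s)
    (h : (H.induce (insert a s)).Reachable ⟨u, mem_insert_of_mem a hu⟩ ⟨v, hv⟩) :
    ∃ hv' : v ∈ s, (H.induce s).Reachable ⟨u, hu⟩ ⟨v, hv'⟩ := by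
  obtain ⟨p⟩ := h
  let q := p.map (Embedding.induce _).toHom
  have hq : ∀ x ∈ q.support, x ∈ s := by
    intro x hx
    have hxa : x ≠ a := q.support_subset_of_closed (S := {a}ᶜ)
      (fun y z hyz _ hz => ha y (hz ▸ hyz.symm)) (ne_of_mem_of_not_mem hu has) x hx
    rw [Walk.support_map, List.mem_map] at hx
    obtain ⟨y, -, rfl⟩ := hx
    exact y.2.resolve_left hxa
  exact ⟨hq v q.end_mem_support, ⟨q.induce s hq⟩⟩

theorem card_connectedComponent_induce_insert [Finite V] {H : SimpleGraph V} {s : Set V}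
    {a : V} (has : a ∉ s) (ha : ∀ v, ¬ H.Adj a v) :
    Nat.card (H.induce (insert a s)).ConnectedComponent =
      Nat.card (H.induce s).ConnectedComponent + 1 := by
  let g : Option (H.induce s).ConnectedComponent → (H.induce (insert a s)).ConnectedComponent :=
    fun c => c.elim (connectedComponentMk _ ⟨a, mem_insert a s⟩)
      (ConnectedComponent.map (H.induceHomOfLE (subset_insert a s)).toHom)
  have hg : g.Bijective := by
    constructor
    · rintro (_ | c) (_ | c') h
      · rfl
      · induction c' using ConnectedComponent.ind with | h v =>
        have := Reachable.of_induce_insert has ha v.2 _ (ConnectedComponent.exact h).symm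
        exact (has this.1).elim
      · induction c using ConnectedComponent.ind with | h v =>
        have := Reachable.of_induce_insert has ha v.2 _ (ConnectedComponent.exact h)
        exact (has this.1).elim
      · induction c using ConnectedComponent.ind with | h u =>
        induction c' using ConnectedComponent.ind with | h v =>
        obtain ⟨_, huv⟩ := Reachable.of_induce_insert has ha u.2 _ (ConnectedComponent.exact h)
        exact congrArg some (ConnectedComponent.sound huv)
    · intro c
      induction c using ConnectedComponent.ind with | h x =>
      obtain ⟨x, rfl | hx⟩ := x
      exacts [⟨none, rfl⟩, ⟨some (connectedComponentMk _ ⟨x, hx⟩), rfl⟩]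
  rw [← Nat.card_congr (Equiv.ofBijective g hg), Finite.card_option]

namespace Subgraph

variable {G : SimpleGraph V} {M N : G.Subgraph} {S : Set V}

theorem IsMatching.induce_inter (hM : M.IsMatching) (hS : ∀ ⦃v w⦄, M.Adj v w → v ∈ S → w ∈ S) :
    (M.induce (S ∩ M.verts)).IsMatching := by
  rintro v ⟨hvS, hvM⟩
  obtain ⟨w, hvw, huniq⟩ := hM hvM
  exact ⟨w, ⟨⟨hvS, hvM⟩, ⟨hS hvw hvS, M.edge_vert hvw.symm⟩, hvw⟩, fun u hu => huniq u hu.2.2⟩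

theorem IsMatching.even_ncard_inter [Finite V] (hM : M.IsMatching)
    (hS : ∀ ⦃v w⦄, M.Adj v w → v ∈ S → w ∈ S) : Even (S ∩ M.verts).ncard := by
  have : Fintype (M.induce (S ∩ M.verts)).verts := Fintype.ofFinite _
  simpa [ncard_eq_toFinset_card'] using (hM.induce_inter hS).even_card

theorem IsMatching.even_ncard_verts [Finite V] (hM : M.IsMatching) : Even M.verts.ncard := by
  simpa using hM.even_ncard_inter (S := univ) (by simp)

open Classical in
theorem IsMatching.ncard_neighborSet (hM : M.IsMatching) (v : V) :
    (M.neighborSet v).ncard = if v ∈ M.verts then 1 else 0 := by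
  split_ifs with hv
  · obtain ⟨w, hw, huniq⟩ := hM hv
    exact ncard_eq_one.mpr ⟨w, Set.ext fun u => ⟨huniq u, by rintro rfl; exact hw⟩⟩
  · rw [show M.neighborSet v = ∅ from eq_empty_of_forall_notMem fun w hw => hv (M.edge_vert hw),
      ncard_empty]

theorem IsMatching.exists_verts_eq_insert (hM : M.IsMatching) {x y : V} (hxy : G.Adj x y)
    (hx : x ∉ M.verts) (hy : y ∉ M.verts) :
    ∃ M' : G.Subgraph, M'.IsMatching ∧ M'.verts = insert x (insert y M.verts) := by
  refine ⟨M ⊔ G.subgraphOfAdj hxy, hM.sup (.subgraphOfAdj hxy) ?_, ?_⟩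
  · rw [hM.support_eq_verts, support_subgraphOfAdj, disjoint_insert_right, disjoint_singleton_right]
    exact ⟨hx, hy⟩
  · rw [verts_sup, subgraphOfAdj_verts, union_comm, insert_union, singleton_union]

def piecewise (S : Set V) (N M : G.Subgraph) : G.Subgraph :=
  N.induce (S ∩ N.verts) ⊔ M.induce (Sᶜ ∩ M.verts)

theorem verts_piecewise : (piecewise S N M).verts = S ∩ N.verts ∪ Sᶜ ∩ M.verts := rfl

theorem notMem_verts_piecewise_of_mem {v : V} (hvS : v ∈ S) (hv : v ∉ N.verts) :
    v ∉ (piecewise S N M).verts := by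
  simp [verts_piecewise, hvS, hv]

theorem notMem_verts_piecewise_of_notMem {v : V} (hvS : v ∉ S) (hv : v ∉ M.verts) :
    v ∉ (piecewise S N M).verts := by
  simp [verts_piecewise, hvS, hv]

theorem IsMatching.piecewise (hN : N.IsMatching) (hM : M.IsMatching)
    (hSN : ∀ ⦃v w⦄, N.Adj v w → v ∈ S → w ∈ S) (hSM : ∀ ⦃v w⦄, M.Adj v w → v ∈ S → w ∈ S) :
    (piecewise S N M).IsMatching := by
  have hN' := hN.induce_inter hSN
  have hM' := hM.induce_inter (S := Sᶜ) fun v w hvw hv hw => hv (hSM hvw.symm hw)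
  refine hN'.sup hM' ?_
  rw [hN'.support_eq_verts, hM'.support_eq_verts]
  exact disjoint_compl_right.mono inter_subset_left inter_subset_left

theorem ncard_verts_piecewise [Finite V] :
    (piecewise S N M).verts.ncard + (S \ N.verts).ncard =
      M.verts.ncard + (S \ M.verts).ncard := by
  rw [verts_piecewise, ncard_union_eq (disjoint_compl_right.mono inter_subset_left
    inter_subset_left), inter_comm Sᶜ, ← sdiff_eq, ← ncard_inter_add_ncard_sdiff_eq_ncard M.verts S,
    inter_comm M.verts]
  have := ncard_inter_add_ncard_sdiff_eq_ncard S N.verts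
  have := ncard_inter_add_ncard_sdiff_eq_ncard S M.verts
  omega

theorem mem_supp_of_adj_left (K : (M ⊔ N).spanningCoe.ConnectedComponent) :
    ∀ ⦃v w⦄, M.Adj v w → v ∈ K.supp → w ∈ K.supp :=
  fun _ _ h hv => K.mem_supp_of_adj_mem_supp hv (Or.inl h)

theorem mem_supp_of_adj_right (K : (M ⊔ N).spanningCoe.ConnectedComponent) :
    ∀ ⦃v w⦄, N.Adj v w → v ∈ K.supp → w ∈ K.supp :=
  fun _ _ h hv => K.mem_supp_of_adj_mem_supp hv (Or.inr h)

/-- A connected component `K` of `M ⊔ N` has at least `|K| - 1` edges, and at most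
`(|K ∩ V(M)| + |K ∩ V(N)|) / 2`. -/
theorem IsMatching.ncard_sdiff_add_ncard_sdiff_le_two [Finite V] (hM : M.IsMatching)
    (hN : N.IsMatching) (K : (M ⊔ N).spanningCoe.ConnectedComponent) :
    (K.supp \ M.verts).ncard + (K.supp \ N.verts).ncard ≤ 2 := by
  classical
  have : Fintype K := Fintype.ofFinite _
  have hcount (T : Set V) : ∑ x : K, (if (x : V) ∈ T then 1 else 0) = (K.supp ∩ T).ncard := by
    rw [Finset.sum_boole, Nat.cast_id, ← ncard_coe_finset,
      ← ncard_image_of_injective _ Subtype.val_injective]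
    congr 1
    ext
    simp only [Finset.coe_filter, Finset.mem_univ, true_and, mem_image, mem_ofPred_eq,
      Subtype.exists, exists_and_right, exists_eq_right, mem_inter_iff]
    exact ⟨fun ⟨h, hT⟩ => ⟨h, hT⟩, fun ⟨h, hT⟩ => ⟨h, hT⟩⟩
  have hdeg (x : K) : (K.toSimpleGraph.neighborSet x).ncard ≤
      (if (x : V) ∈ M.verts then 1 else 0) + (if (x : V) ∈ N.verts then 1 else 0) := by
    rw [← hM.ncard_neighborSet, ← hN.ncard_neighborSet,
      ← ncard_image_of_injective _ Subtype.val_injective]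
    calc _ ≤ ((M ⊔ N).neighborSet x).ncard := ncard_le_ncard (by rintro _ ⟨y, hy, rfl⟩; exact hy)
      _ ≤ _ := by rw [neighborSet_sup]; exact ncard_union_le _ _
  have hconn := K.connected_toSimpleGraph.two_mul_card_le_sum_ncard_neighborSet
  have hsum := Finset.sum_le_sum fun x (_ : x ∈ Finset.univ) => hdeg x
  rw [Finset.sum_add_distrib, hcount, hcount] at hsum
  rw [← Nat.card_eq_fintype_card, show Nat.card K = K.supp.ncard from Nat.card_coe_set_eq _]
    at hconn
  have := ncard_inter_add_ncard_sdiff_eq_ncard K.supp M.verts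
  have := ncard_inter_add_ncard_sdiff_eq_ncard K.supp N.verts
  omega

variable {a : V}

theorem notMem_verts_of_deleteIncidenceSet {P : (G.deleteIncidenceSet a).Subgraph}
    (hP : P.IsMatching) : a ∉ P.verts := fun ha =>
  have ⟨_, haw, _⟩ := hP ha
  (deleteIncidenceSet_adj.mp (P.adj_sub haw)).2.1 rfl

theorem IsMatching.exists_of_le {H : SimpleGraph V} (hHG : H ≤ G) {P : H.Subgraph}
    (hP : P.IsMatching) : ∃ M : G.Subgraph, M.IsMatching ∧ M.verts = P.verts :=
  ⟨P.map (Hom.ofLE hHG), hP.map_ofLE hHG, by simp⟩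

theorem IsMatching.exists_of_forall_adj {H : SimpleGraph V} (hHG : H ≤ G) (hM : M.IsMatching)
    (hMH : ∀ ⦃v w⦄, M.Adj v w → H.Adj v w) :
    ∃ P : H.Subgraph, P.IsMatching ∧ P.verts = M.verts := by
  refine ⟨M.comap (Hom.ofLE hHG), fun v hv => ?_, rfl⟩
  obtain ⟨w, hvw, huniq⟩ := hM hv
  exact ⟨w, ⟨hMH hvw, hvw⟩, fun u hu => huniq u hu.2⟩

theorem IsMatching.exists_deleteIncidenceSet [Finite V] (hM : M.IsMatching) {b : V}
    (hab : M.Adj a b) : ∃ P : (G.deleteIncidenceSet a).Subgraph,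
      P.IsMatching ∧ P.verts = M.verts \ {a, b} ∧ P.verts.ncard + 2 = M.verts.ncard := by
  have hS : ∀ ⦃v w⦄, M.Adj v w → v ∈ ({a, b} : Set V)ᶜ → w ∈ ({a, b} : Set V)ᶜ := by
    rintro v w hvw hv (rfl | rfl)
    exacts [hv (.inr (hM.eq_of_adj_left hab hvw.symm).symm),
      hv (.inl (hM.eq_of_adj_right hab hvw).symm)]
  obtain ⟨P, hP, hPv⟩ := (hM.induce_inter hS).exists_of_forall_adj (G.deleteIncidenceSet_le a)
    fun v w ⟨hv, hw, hvw⟩ => deleteIncidenceSet_adj.mpr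
      ⟨M.adj_sub hvw, fun h => hv.1 (.inl h), fun h => hw.1 (.inl h)⟩
  rw [induce_verts, inter_comm, ← sdiff_eq] at hPv
  refine ⟨P, hP, hPv, ?_⟩
  rw [hPv, ← ncard_pair (M.adj_sub hab).ne,
    ncard_sdiff_add_ncard_of_subset (pair_subset (M.edge_vert hab) (M.edge_vert hab.symm))]

end Subgraph

end SimpleGraph

open SimpleGraph Subgraph

variable {G : SimpleGraph V} {M N : G.Subgraph} {S : Set V}

theorem mem_dset_iff {v : V} : v ∈ Dset G ↔ ∃ M, IsMaxMatching G M ∧ v ∉ M.verts := by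
  refine exists_congr fun M => and_congr_right fun hM => ?_
  rw [hM.1.support_eq_verts]

theorem exists_isMaxMatching [Finite V] (G : SimpleGraph V) : ∃ M, IsMaxMatching G M := by
  have : Nonempty {N : G.Subgraph // N.IsMatching} := ⟨⊥, fun _ h => h.elim⟩
  obtain ⟨⟨M, hM⟩, hmax⟩ := Finite.exists_max
    (fun N : {N : G.Subgraph // N.IsMatching} => N.1.support.ncard)
  exact ⟨M, hM, fun N hN => hmax ⟨N, hN⟩⟩

namespace IsMaxMatching

theorem ncard_verts_le (hM : IsMaxMatching G M) (hN : N.IsMatching) :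
    N.verts.ncard ≤ M.verts.ncard := by
  simpa only [hN.support_eq_verts, hM.1.support_eq_verts] using hM.2 N hN

theorem of_ncard_verts_le (hM : IsMaxMatching G M) (hN : N.IsMatching)
    (h : M.verts.ncard ≤ N.verts.ncard) : IsMaxMatching G N := by
  refine ⟨hN, fun P hP => ?_⟩
  rw [hP.support_eq_verts, hN.support_eq_verts]
  exact (hM.ncard_verts_le hP).trans h

theorem mem_dset (hM : IsMaxMatching G M) {v : V} (hv : v ∉ M.verts) : v ∈ Dset G :=
  mem_dset_iff.mpr ⟨M, hM, hv⟩

theorem mem_verts_of_mem_aset (hM : IsMaxMatching G M) {a : V} (ha : a ∈ Aset G) :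
    a ∈ M.verts :=
  by_contra fun h => ha.1 (hM.mem_dset h)

theorem not_adj [Finite V] (hM : IsMaxMatching G M) {x y : V} (hx : x ∉ M.verts)
    (hy : y ∉ M.verts) : ¬ G.Adj x y := by
  intro hxy
  obtain ⟨M', hM', hM'v⟩ := hM.1.exists_verts_eq_insert hxy hx hy
  have := hM.ncard_verts_le hM'
  rw [hM'v, ncard_insert_of_notMem (by simp [hxy.ne, hx]), ncard_insert_of_notMem hy] at this
  omega

/-- Taking `N` on `S` and `M` elsewhere must not beat the maximum matching `M`. -/
theorem ncard_sdiff_le [Finite V] (hM : IsMaxMatching G M) (hN : N.IsMatching)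
    (hSM : ∀ ⦃v w⦄, M.Adj v w → v ∈ S → w ∈ S) (hSN : ∀ ⦃v w⦄, N.Adj v w → v ∈ S → w ∈ S) :
    (S \ M.verts).ncard ≤ (S \ N.verts).ncard := by
  have := hM.ncard_verts_le (hN.piecewise hM.1 hSN hSM)
  have := ncard_verts_piecewise (S := S) (N := N) (M := M)
  omega

theorem ncard_sdiff_eq_or [Finite V] (hN : IsMaxMatching G N) (hM : M.IsMatching)
    (K : (M ⊔ N).spanningCoe.ConnectedComponent) :
    (K.supp \ M.verts).ncard = (K.supp \ N.verts).ncard ∨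
      (K.supp \ M.verts).ncard = 2 ∧ (K.supp \ N.verts).ncard = 0 := by
  have := hN.ncard_sdiff_le hM (mem_supp_of_adj_right K) (mem_supp_of_adj_left K)
  have := hM.ncard_sdiff_add_ncard_sdiff_le_two hN.1 K
  obtain ⟨r, hr⟩ := hM.even_ncard_inter (mem_supp_of_adj_left K)
  obtain ⟨t, ht⟩ := hN.1.even_ncard_inter (mem_supp_of_adj_right K)
  have := ncard_inter_add_ncard_sdiff_eq_ncard K.supp M.verts
  have := ncard_inter_add_ncard_sdiff_eq_ncard K.supp N.verts
  omega

end IsMaxMatching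

theorem mem_dset_of_adj_of_aset_eq_empty (hA : Aset G = ∅) :
    ∀ ⦃v w⦄, G.Adj v w → v ∈ Dset G → w ∈ Dset G :=
  fun v w hvw hv => by_contra fun hw => eq_empty_iff_forall_notMem.mp hA w ⟨hw, v, hv, hvw.symm⟩

/-- Gallai's lemma. Along a walk `x b ⋯ y`, swap a maximum matching `M` with one missing `b`
on the component of `b` in their union: this exposes `b`, and either contradicts maximality
(if `x` stays exposed) or moves the exposed end from `x` to `b`. -/
theorem eq_of_walk_of_aset_eq_empty [Finite V] (hA : Aset G = ∅) {x y : V} (p : G.Walk x y) :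
    ∀ M, IsMaxMatching G M → x ∉ M.verts → y ∉ M.verts → x = y := by
  induction p with
  | nil => exact fun _ _ _ _ => rfl
  | @cons x b y hxb q ih =>
  intro M hM hx hy
  obtain ⟨N, hN, hb⟩ := mem_dset_iff.mp (mem_dset_of_adj_of_aset_eq_empty hA hxb (hM.mem_dset hx))
  set K := (M ⊔ N).spanningCoe.connectedComponentMk b
  have hbK : b ∈ K.supp := rfl
  have hMN := hM.ncard_sdiff_le hN.1 (mem_supp_of_adj_left K) (mem_supp_of_adj_right K)
  have hNM := hN.ncard_sdiff_le hM.1 (mem_supp_of_adj_right K) (mem_supp_of_adj_left K)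
  have htwo := hM.1.ncard_sdiff_add_ncard_sdiff_le_two hN.1 K
  have hone : (K.supp \ M.verts).ncard ≤ 1 := by
    have := (ncard_pos (toFinite (K.supp \ N.verts))).mpr ⟨b, hbK, hb⟩
    omega
  have hM' : IsMaxMatching G (piecewise K.supp N M) :=
    hM.of_ncard_verts_le (hN.1.piecewise hM.1 (mem_supp_of_adj_right K) (mem_supp_of_adj_left K))
      (by have := ncard_verts_piecewise (S := K.supp) (N := N) (M := M); omega)
  have hbM' : b ∉ (piecewise K.supp N M).verts := notMem_verts_piecewise_of_mem hbK hb
  by_cases hxK : x ∈ K.supp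
  · by_cases hyK : y ∈ K.supp
    · exact (ncard_le_one (toFinite _)).mp hone x ⟨hxK, hx⟩ y ⟨hyK, hy⟩
    · have hby := ih _ hM' hbM' (notMem_verts_piecewise_of_notMem hyK hy)
      exact absurd (hby ▸ hbK) hyK
  · exact absurd hxb (hM'.not_adj (notMem_verts_piecewise_of_notMem hxK hx) hbM')

theorem ncard_compl_verts_eq_card_connectedComponent [Finite V] (hA : Aset G = ∅)
    (hM : IsMaxMatching G M) :
    M.vertsᶜ.ncard = Nat.card (G.induce (Dset G)).ConnectedComponent := by
  have hD : M.vertsᶜ ⊆ Dset G := fun v hv => hM.mem_dset hv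
  let f : ↥M.vertsᶜ → (G.induce (Dset G)).ConnectedComponent :=
    fun v => connectedComponentMk _ ⟨v, hD v.2⟩
  rw [← Nat.card_coe_set_eq]
  refine Nat.card_congr (Equiv.ofBijective f ⟨?_, ?_⟩)
  · rintro ⟨u, hu⟩ ⟨v, hv⟩ h
    obtain ⟨p⟩ : G.Reachable u v := (ConnectedComponent.exact h).map (Embedding.induce _).toHom
    exact Subtype.ext (eq_of_walk_of_aset_eq_empty hA p M hM hu hv)
  · intro c
    induction c using ConnectedComponent.ind with | h v =>
    obtain ⟨v, hv⟩ := v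
    obtain ⟨N, hN, hvN⟩ := mem_dset_iff.mp hv
    set K := (M ⊔ N).spanningCoe.connectedComponentMk v
    have hNM := hN.ncard_sdiff_le hM.1 (mem_supp_of_adj_right K) (mem_supp_of_adj_left K)
    have hpos := (ncard_pos (toFinite (K.supp \ N.verts))).mpr ⟨v, rfl, hvN⟩
    obtain ⟨w, hwK, hwM⟩ := nonempty_of_ncard_ne_zero (s := K.supp \ M.verts) (by omega)
    have hwv : G.Reachable w v := (ConnectedComponent.exact hwK).mono (spanningCoe_le _)
    exact ⟨⟨w, hwM⟩, ConnectedComponent.sound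
      (hwv.induce_of_closed (mem_dset_of_adj_of_aset_eq_empty hA) (hD hwM) hv)⟩

section deleteIncidenceSet

variable [Finite V] {a : V}

theorem IsMaxMatching.ncard_verts_deleteIncidenceSet_add_two (ha : a ∈ Aset G)
    (hM : IsMaxMatching G M) {M' : (G.deleteIncidenceSet a).Subgraph}
    (hM' : IsMaxMatching _ M') : M'.verts.ncard + 2 = M.verts.ncard := by
  obtain ⟨b, hab, -⟩ := hM.1 (hM.mem_verts_of_mem_aset ha)
  obtain ⟨P, hP, -, hPcard⟩ := hM.1.exists_deleteIncidenceSet hab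
  have hlower := hM'.ncard_verts_le hP
  obtain ⟨Q, hQ, hQv⟩ := hM'.1.exists_of_le (G.deleteIncidenceSet_le a)
  have hupper := hM.ncard_verts_le hQ
  have hne : Q.verts.ncard ≠ M.verts.ncard := fun h =>
    ha.1 ((hM.of_ncard_verts_le hQ h.ge).mem_dset (hQv ▸ notMem_verts_of_deleteIncidenceSet hM'.1))
  obtain ⟨k, hk⟩ := hM.1.even_ncard_verts
  obtain ⟨l, hl⟩ := hM'.1.even_ncard_verts
  rw [hQv] at hupper hne
  omega

/-- Let `P` be a maximum matching of `G - a` missing `v`, viewed in `G`, and `N` a maximum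
matching of `G` missing a neighbour `u ∈ D(G)` of `a`. On the component `K` of `v` in `P ⊔ N`,
either `P` can replace `N`; or `K` contains `a`, and replacing `N` by `P` leaves room for the
edge `au`; or else `N` can replace `P`, exposing `a ∉ D(G)` in a maximum matching. -/
theorem mem_dset_of_mem_dset_deleteIncidenceSet (ha : a ∈ Aset G) {v : V} (hva : v ≠ a)
    (hv : v ∈ Dset (G.deleteIncidenceSet a)) : v ∈ Dset G := by
  obtain ⟨u, huD, hau⟩ := ha.2
  rcases eq_or_ne v u with rfl | hvu
  · exact huD
  obtain ⟨M', hM', hvM'⟩ := mem_dset_iff.mp hv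
  obtain ⟨P, hP, hPv⟩ := hM'.1.exists_of_le (G.deleteIncidenceSet_le a)
  obtain ⟨N, hN, huN⟩ := mem_dset_iff.mp huD
  have hPN := hN.ncard_verts_deleteIncidenceSet_add_two ha hM'
  have haP : a ∉ P.verts := hPv ▸ notMem_verts_of_deleteIncidenceSet hM'.1
  have hvP : v ∉ P.verts := hPv ▸ hvM'
  rw [← hPv] at hPN
  set K := (P ⊔ N).spanningCoe.connectedComponentMk v
  have hvK : v ∈ K.supp := rfl
  have hKP := mem_supp_of_adj_left K
  have hKN := mem_supp_of_adj_right K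
  have hQ := hP.piecewise hN.1 hKP hKN
  have hQv := ncard_verts_piecewise (S := K.supp) (N := P) (M := N)
  have hvQ : v ∉ (piecewise K.supp P N).verts := notMem_verts_piecewise_of_mem hvK hvP
  rcases hN.ncard_sdiff_eq_or hP K with heq | hK
  · exact (hN.of_ncard_verts_le hQ (by omega)).mem_dset hvQ
  by_cases haK : a ∈ K.supp
  · have huK : u ∉ K.supp := fun huK =>
      (ncard_eq_zero (toFinite _)).mp hK.2 |>.subset ⟨huK, huN⟩
    have haQ := notMem_verts_piecewise_of_mem (M := N) haK haP
    have huQ := notMem_verts_piecewise_of_notMem (N := P) huK huN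
    obtain ⟨R, hR, hRv⟩ := hQ.exists_verts_eq_insert hau haQ huQ
    refine (hN.of_ncard_verts_le hR ?_).mem_dset ?_
    · rw [hRv, ncard_insert_of_notMem (by simpa [hau.ne] using haQ), ncard_insert_of_notMem huQ]
      omega
    · simpa only [hRv, mem_insert_iff, not_or] using ⟨hva, hvu, hvQ⟩
  · have := ncard_verts_piecewise (S := K.supp) (N := N) (M := P)
    exact absurd ((hN.of_ncard_verts_le (hN.1.piecewise hP hKN hKP) (by omega)).mem_dset
      (notMem_verts_piecewise_of_notMem haK haP)) ha.1

theorem dset_deleteIncidenceSet (ha : a ∈ Aset G) :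
    Dset (G.deleteIncidenceSet a) = insert a (Dset G) := by
  obtain ⟨M', hM'⟩ := exists_isMaxMatching (G.deleteIncidenceSet a)
  ext v
  refine ⟨fun hv => ?_, ?_⟩
  · rcases eq_or_ne v a with rfl | hva
    exacts [mem_insert v _, mem_insert_of_mem a (mem_dset_of_mem_dset_deleteIncidenceSet ha hva hv)]
  rintro (rfl | hv)
  · exact hM'.mem_dset (notMem_verts_of_deleteIncidenceSet hM'.1)
  obtain ⟨M, hM, hvM⟩ := mem_dset_iff.mp hv
  obtain ⟨b, hab, -⟩ := hM.1 (hM.mem_verts_of_mem_aset ha)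
  obtain ⟨P, hP, hPv, hPcard⟩ := hM.1.exists_deleteIncidenceSet hab
  have := hM.ncard_verts_deleteIncidenceSet_add_two ha hM'
  exact (hM'.of_ncard_verts_le hP (by omega)).mem_dset (by simp [hPv, hvM])

theorem aset_deleteIncidenceSet (ha : a ∈ Aset G) :
    Aset (G.deleteIncidenceSet a) = Aset G \ {a} := by
  ext w
  simp only [Aset, dset_deleteIncidenceSet ha, deleteIncidenceSet_adj, mem_ofPred_eq,
    mem_insert_iff, mem_sdiff, mem_singleton_iff, not_or]
  constructor
  · rintro ⟨⟨hwa, hw⟩, u, hu, hwu, -, hua⟩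
    exact ⟨⟨hw, u, hu.resolve_left hua, hwu⟩, hwa⟩
  · rintro ⟨⟨hw, u, hu, hwu⟩, hwa⟩
    exact ⟨⟨hwa, hw⟩, u, .inr hu, hwu, hwa, fun h => ha.1 (h ▸ hu)⟩

theorem card_connectedComponent_dset_deleteIncidenceSet (ha : a ∈ Aset G) :
    Nat.card ((G.deleteIncidenceSet a).induce (Dset (G.deleteIncidenceSet a))).ConnectedComponent =
      Nat.card (G.induce (Dset G)).ConnectedComponent + 1 := by
  rw [dset_deleteIncidenceSet ha, card_connectedComponent_induce_insert ha.1
    fun v h => (deleteIncidenceSet_adj.mp h).2.1 rfl, induce_deleteIncidenceSet_of_notMem _ ha.1]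

end deleteIncidenceSet

theorem IsMaxMatching.ncard_verts_add_card_connectedComponent [Finite V]
    (hM : IsMaxMatching G M) :
    M.verts.ncard + Nat.card (G.induce (Dset G)).ConnectedComponent =
      Nat.card V + (Aset G).ncard := by
  induction hn : (Aset G).ncard generalizing G M with
  | zero =>
    rw [Nat.add_zero, ← ncard_add_ncard_compl M.verts,
      ncard_compl_verts_eq_card_connectedComponent ((ncard_eq_zero (toFinite _)).mp hn) hM]
  | succ n ih =>
    obtain ⟨a, ha⟩ := nonempty_of_ncard_ne_zero (s := Aset G) (by omega)
    obtain ⟨M', hM'⟩ := exists_isMaxMatching (G.deleteIncidenceSet a)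
    have hA' : (Aset (G.deleteIncidenceSet a)).ncard = n := by
      rw [aset_deleteIncidenceSet ha, ncard_sdiff_singleton_of_mem ha, hn, Nat.add_sub_cancel]
    have := ih hM' hA'
    rw [card_connectedComponent_dset_deleteIncidenceSet ha] at this
    have := hM.ncard_verts_deleteIncidenceSet_add_two ha hM'
    omega

end EdmondsGallai

/-- Edmonds–Gallai formula for the matching number:
`2ν(G) = |V| − c(D(G)) + |A(G)|`, i.e. the number of vertices covered by a
maximum matching equals `|V| + |A(G)| − c(D(G))`, where `c(D(G))` is the number of
connected components of the subgraph induced by `D(G)`. -/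
theorem stmt6 {V : Type*} [Fintype V] (G : SimpleGraph V)
    (M : G.Subgraph) (hM : IsMaxMatching G M) :
    M.support.ncard + Nat.card (G.induce (Dset G)).ConnectedComponent
      = Fintype.card V + (Aset G).ncard := by
  rw [hM.1.support_eq_verts, ← Nat.card_eq_fintype_card]
  exact hM.ncard_verts_add_card_connectedComponent
end

section
/- Every component of the subgraph of G induced by D(G), the set of vertices missed by at least one maximum matching, is factor-critical: for each such component H and each vertex v of H, the graph H − v has a perfect matching. -/
/-!
By the Gallai–Edmonds stability lemma, deleting a vertex of `A(G)` (a vertex outside `D(G)` with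
a neighbour in `D(G)`) adds only that vertex to `D` and leaves `G[D(G)]` unchanged. By induction we
may therefore assume that no edge leaves `D(G)`. Then every vertex of `G[D(G)]` is missed by one of
its maximum matchings, and Gallai's lemma shows that a maximum matching missing `v` covers the rest
of the component of `v`: for two missed vertices at minimal distance, an exchange along an
alternating path yields a maximum matching missing two closer vertices.
-/

section

open Function Set

variable {V : Type*}

theorem Function.Involutive.ncard_fixedPoints_modEq [Finite V] {f : V → V} (hf : Involutive f) :
    (fixedPoints f).ncard ≡ Nat.card V [MOD 2] := by
  classical
  have := Fintype.ofFinite V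
  have hsq : (show Function.End V from f) ^ 2 ^ 1 = 1 := funext hf
  rw [Nat.card_eq_fintype_card, ← Nat.card_coe_set_eq, Nat.card_eq_fintype_card]
  exact (Equiv.Perm.card_fixedPoints_modEq hsq).symm

theorem Function.Involutive.piecewise {a b : V → V} {P : Set V} [DecidablePred (· ∈ P)]
    (ha : Involutive a) (hb : Involutive b) (haP : MapsTo a P P) (hbP : MapsTo b P P) :
    Involutive (P.piecewise b a) := by
  intro y
  by_cases hy : y ∈ P
  · rw [piecewise_eq_of_mem _ _ _ hy, piecewise_eq_of_mem _ _ _ (hbP hy), hb]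
  · have hay : a y ∉ P := fun h => hy (ha y ▸ haP h)
    rw [piecewise_eq_of_notMem _ _ _ hy, piecewise_eq_of_notMem _ _ _ hay, ha]

theorem Set.ncard_fixedPoints_piecewise [Finite V] (P : Set V) [DecidablePred (· ∈ P)]
    (a b : V → V) :
    (fixedPoints (P.piecewise b a)).ncard + (P ∩ fixedPoints a).ncard =
      (fixedPoints a).ncard + (P ∩ fixedPoints b).ncard := by
  have hfix : fixedPoints (P.piecewise b a) = (P ∩ fixedPoints b) ∪ (fixedPoints a \ P) := by
    ext y
    by_cases hy : y ∈ P <;> simp [IsFixedPt, hy]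
  rw [hfix, ncard_union_eq (disjoint_left.2 fun y hy h => h.2 hy.1),
    ← ncard_inter_add_ncard_sdiff_eq_ncard (fixedPoints a) P, inter_comm (fixedPoints a) P]
  omega

section AlternatingWalk

variable {a b : V → V} {v : V} {i j n K : ℕ}

def alternatingStep (a b : V → V) (n : ℕ) : V → V := if n % 2 = 0 then a else b

def alternatingWalk (a b : V → V) (v : V) : ℕ → V
  | 0 => v
  | n + 1 => alternatingStep a b n (alternatingWalk a b v n)

theorem alternatingStep_congr (h : i % 2 = j % 2) :
    alternatingStep a b i = alternatingStep a b j := by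
  simp only [alternatingStep, h]

theorem alternatingStep_involutive (ha : Involutive a) (hb : Involutive b) (n : ℕ) :
    Involutive (alternatingStep a b n) := by
  unfold alternatingStep; split_ifs <;> assumption

theorem alternatingWalk_succ :
    alternatingWalk a b v (n + 1) = alternatingStep a b n (alternatingWalk a b v n) := rfl

theorem alternatingWalk_eq_alternatingStep_succ (ha : Involutive a) (hb : Involutive b) (n : ℕ) :
    alternatingWalk a b v n = alternatingStep a b n (alternatingWalk a b v (n + 1)) :=
  (alternatingStep_involutive ha hb n _).symm

/-- Stepping back from a repetition gives a repetition at smaller indices (with `b v = v`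
reflecting the walk at its start), until two consecutive vertices coincide. -/
theorem exists_alternatingWalk_succ_eq_of_eq (ha : Involutive a) (hb : Involutive b)
    (hbv : b v = v) (hij : i < j) (heq : alternatingWalk a b v i = alternatingWalk a b v j) :
    ∃ l < j, alternatingWalk a b v (l + 1) = alternatingWalk a b v l := by
  induction j using Nat.strong_induction_on generalizing i with
  | _ j ih =>
  obtain ⟨j, rfl⟩ : ∃ k, j = k + 1 := ⟨j - 1, by omega⟩
  have hback := alternatingWalk_eq_alternatingStep_succ (v := v) ha hb j
  by_cases hji : i = j
  · exact ⟨j, by omega, by rw [← heq, hji]⟩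
  by_cases hpar : i % 2 = j % 2
  · have : alternatingWalk a b v (i + 1) = alternatingWalk a b v j := by
      rw [alternatingWalk_succ, alternatingStep_congr hpar, heq, ← hback]
    obtain ⟨l, hl, hs⟩ := ih j (by omega) (by omega) this
    exact ⟨l, by omega, hs⟩
  obtain _ | i := i
  · have : alternatingWalk a b v 0 = alternatingWalk a b v j := by
      rw [hback, ← heq, alternatingStep_congr (j := 1) (by omega)]
      exact hbv.symm
    obtain ⟨l, hl, hs⟩ := ih j (by omega) (by omega) this
    exact ⟨l, by omega, hs⟩
  · have : alternatingWalk a b v i = alternatingWalk a b v j := by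
      rw [alternatingWalk_eq_alternatingStep_succ ha hb i, hback, heq,
        alternatingStep_congr (i := i) (j := j) (by omega)]
    obtain ⟨l, hl, hs⟩ := ih j (by omega) (by omega) this
    exact ⟨l, by omega, hs⟩

theorem exists_alternatingWalk_succ_eq [Finite V] (ha : Involutive a) (hb : Involutive b)
    (hbv : b v = v) :
    ∃ l, alternatingWalk a b v (l + 1) = alternatingWalk a b v l := by
  obtain ⟨i, j, hne, h⟩ := Finite.exists_ne_map_eq_of_infinite (alternatingWalk a b v)
  rcases hne.lt_or_gt with hij | hji
  · obtain ⟨l, -, hl⟩ := exists_alternatingWalk_succ_eq_of_eq ha hb hbv hij h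
    exact ⟨l, hl⟩
  · obtain ⟨l, -, hl⟩ := exists_alternatingWalk_succ_eq_of_eq ha hb hbv hji h.symm
    exact ⟨l, hl⟩

/-- Up to the first stall `K`, the step of the parity of `i` moves the `i`-th vertex forward and
the other step moves it back, so the only fixed points on the walk are at its two ends. -/
theorem alternatingStep_alternatingWalk_eq_iff (ha : Involutive a) (hb : Involutive b)
    (hbv : b v = v) (hK : alternatingWalk a b v (K + 1) = alternatingWalk a b v K)
    (hmin : ∀ l < K, alternatingWalk a b v (l + 1) ≠ alternatingWalk a b v l)
    (hi : i ≤ K) (n : ℕ) :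
    alternatingStep a b n (alternatingWalk a b v i) = alternatingWalk a b v i ↔
      i = K ∧ K % 2 = n % 2 ∨ i = 0 ∧ n % 2 = 1 := by
  by_cases hpar : n % 2 = i % 2
  · rw [alternatingStep_congr hpar, ← alternatingWalk_succ]
    constructor
    · intro h
      obtain rfl : i = K := by_contra fun hne => hmin i (by omega) h
      exact Or.inl ⟨rfl, hpar.symm⟩
    · rintro (⟨rfl, -⟩ | ⟨rfl, h⟩)
      · exact hK
      · omega
  obtain _ | i := i
  · rw [alternatingStep_congr (j := 1) (by omega)]
    exact iff_of_true hbv (Or.inr ⟨rfl, by omega⟩)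
  · rw [alternatingStep_congr (j := i) (by omega),
      ← alternatingWalk_eq_alternatingStep_succ ha hb]
    exact iff_of_false (fun h => hmin i (by omega) h.symm) (by omega)

theorem mapsTo_alternatingStep (ha : Involutive a) (hb : Involutive b) (hbv : b v = v)
    (hK : alternatingWalk a b v (K + 1) = alternatingWalk a b v K) (n : ℕ) :
    MapsTo (alternatingStep a b n) (alternatingWalk a b v '' Iic K)
      (alternatingWalk a b v '' Iic K) := by
  rintro _ ⟨i, hi, rfl⟩
  rw [mem_Iic] at hi
  by_cases hpar : n % 2 = i % 2
  · rw [alternatingStep_congr hpar, ← alternatingWalk_succ]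
    rcases hi.lt_or_eq with hi | rfl
    · exact mem_image_of_mem _ (mem_Iic.2 hi)
    · exact hK ▸ mem_image_of_mem _ self_mem_Iic
  obtain _ | i := i
  · rw [alternatingStep_congr (j := 1) (by omega)]
    exact ⟨0, Nat.zero_le K, hbv.symm⟩
  · rw [alternatingStep_congr (j := i) (by omega),
      ← alternatingWalk_eq_alternatingStep_succ ha hb]
    exact mem_image_of_mem _ (mem_Iic.2 (by omega))

/-- `P` is the path traced from `v` by applying `a` and `b` alternately until it stops, and `e`
is its other end. -/
theorem exists_alternating_path [Finite V] (ha : Involutive a) (hb : Involutive b)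
    (hbv : b v = v) (hav : a v ≠ v) :
    ∃ P : Set V, ∃ e ∈ P, v ∈ P ∧ e ≠ v ∧ MapsTo a P P ∧ MapsTo b P P ∧
      (P ∩ fixedPoints a = {e} ∧ P ∩ fixedPoints b = {v} ∨
        P ∩ fixedPoints a = ∅ ∧ P ∩ fixedPoints b = {v, e}) := by
  classical
  have hex := exists_alternatingWalk_succ_eq ha hb hbv
  set K := Nat.find hex
  set x := alternatingWalk a b v
  have hK : x (K + 1) = x K := Nat.find_spec hex
  have hmin : ∀ l < K, x (l + 1) ≠ x l := fun l hl => Nat.find_min hex hl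
  have hfix (n : ℕ) (I : Set ℕ)
      (hI : ∀ i, i ≤ K ∧ (i = K ∧ K % 2 = n % 2 ∨ i = 0 ∧ n % 2 = 1) ↔ i ∈ I) :
      x '' Iic K ∩ fixedPoints (alternatingStep a b n) = x '' I := by
    have := fun {i} (hi : i ≤ K) => alternatingStep_alternatingWalk_eq_iff ha hb hbv hK hmin hi n
    ext y
    constructor
    · rintro ⟨⟨i, hi, rfl⟩, hy⟩
      exact ⟨i, (hI i).1 ⟨hi, (this hi).1 hy⟩, rfl⟩
    · rintro ⟨i, hiI, rfl⟩
      obtain ⟨hi, hc⟩ := (hI i).2 hiI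
      exact ⟨⟨i, hi, rfl⟩, (this hi).2 hc⟩
  have hK0 : K ≠ 0 := fun h => hav (by rw [h] at hK; exact hK)
  have hne : x K ≠ x 0 := fun h => by
    obtain ⟨l, hl, hs⟩ :=
      exists_alternatingWalk_succ_eq_of_eq ha hb hbv (Nat.pos_of_ne_zero hK0) h.symm
    exact hmin l hl hs
  refine ⟨x '' Iic K, x K, mem_image_of_mem _ self_mem_Iic, ⟨0, Nat.zero_le K, rfl⟩, hne,
    mapsTo_alternatingStep ha hb hbv hK 0, mapsTo_alternatingStep ha hb hbv hK 1, ?_⟩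
  rcases Nat.mod_two_eq_zero_or_one K with hK2 | hK2
  · refine Or.inl ⟨(hfix 0 {K} fun i => ?_).trans image_singleton,
      (hfix 1 {0} fun i => ?_).trans image_singleton⟩ <;>
    · rw [mem_singleton_iff]; omega
  · refine Or.inr ⟨(hfix 0 ∅ fun i => ?_).trans (image_empty x),
      (hfix 1 {0, K} fun i => ?_).trans (image_pair x 0 K)⟩
    · exact iff_of_false (by omega) (notMem_empty i)
    · rw [mem_insert_iff, mem_singleton_iff]; omega

end AlternatingWalk

namespace SimpleGraph

/-- A matching encoded by its partner function: `m v` is the vertex matched to `v`, and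
`m v = v` when `v` is unmatched. -/
def IsMatchingInvolution (G : SimpleGraph V) (m : V → V) : Prop :=
  Involutive m ∧ ∀ v, m v ≠ v → G.Adj v (m v)

def IsMaxMatchingInvolution (G : SimpleGraph V) (m : V → V) : Prop :=
  G.IsMatchingInvolution m ∧
    ∀ n, G.IsMatchingInvolution n → (fixedPoints m).ncard ≤ (fixedPoints n).ncard

/-- `G` with the edges leaving `s` deleted; unlike `G.induce s`, it is still a graph on `V`. -/
def restrict (G : SimpleGraph V) (s : Set V) : SimpleGraph V where
  Adj x y := G.Adj x y ∧ x ∈ s ∧ y ∈ s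
  symm := ⟨fun _ _ h => ⟨h.1.symm, h.2.2, h.2.1⟩⟩
  loopless := ⟨fun x h => G.loopless.irrefl x h.1⟩

variable {G H : SimpleGraph V} {m M N : V → V} {s P : Set V} {u v w : V}

@[simp]
theorem restrict_adj : (G.restrict s).Adj u v ↔ G.Adj u v ∧ u ∈ s ∧ v ∈ s := Iff.rfl

theorem restrict_le (G : SimpleGraph V) (s : Set V) : G.restrict s ≤ G := fun _ _ h => h.1

theorem restrict_restrict (G : SimpleGraph V) (s t : Set V) :
    (G.restrict s).restrict t = G.restrict (s ∩ t) := by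
  ext x y
  simp only [restrict_adj, mem_inter_iff]
  tauto

theorem Reachable.restrict_of_induce {x y : s} (h : (G.induce s).Reachable x y) :
    (G.restrict s).Reachable x y :=
  h.map (⟨Subtype.val, fun {x y} hxy => ⟨hxy, x.2, y.2⟩⟩ : G.induce s →g G.restrict s)

theorem isMatchingInvolution_id (G : SimpleGraph V) : G.IsMatchingInvolution id :=
  ⟨fun _ => rfl, fun _ h => absurd rfl h⟩

namespace IsMatchingInvolution

theorem mono (hm : G.IsMatchingInvolution m) (hGH : G ≤ H) : H.IsMatchingInvolution m :=
  ⟨hm.1, fun v hv => hGH (hm.2 v hv)⟩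

theorem mapsTo (hm : G.IsMatchingInvolution m) (hs : ∀ x ∈ s, ∀ y, G.Adj x y → y ∈ s) :
    MapsTo m s s := fun x hx => by
  by_cases hmx : m x = x
  · rwa [hmx]
  · exact hs x hx _ (hm.2 x hmx)

theorem piecewise [DecidablePred (· ∈ P)] (ha : G.IsMatchingInvolution M)
    (hb : G.IsMatchingInvolution N) (haP : MapsTo M P P) (hbP : MapsTo N P P) :
    G.IsMatchingInvolution (P.piecewise N M) := by
  refine ⟨ha.1.piecewise hb.1 haP hbP, fun y hy => ?_⟩
  by_cases hyP : y ∈ P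
  · rw [piecewise_eq_of_mem _ _ _ hyP] at hy ⊢
    exact hb.2 y hy
  · rw [piecewise_eq_of_notMem _ _ _ hyP] at hy ⊢
    exact ha.2 y hy

theorem ncard_fixedPoints_modEq [Finite V] (hm : G.IsMatchingInvolution m)
    (hM : H.IsMatchingInvolution M) : (fixedPoints m).ncard ≡ (fixedPoints M).ncard [MOD 2] :=
  hm.1.ncard_fixedPoints_modEq.trans hM.1.ncard_fixedPoints_modEq.symm

theorem exists_augment [Finite V] (hm : G.IsMatchingInvolution m) (hu : m u = u) (hw : m w = w)
    (huw : G.Adj u w) :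
    ∃ m', G.IsMatchingInvolution m' ∧ (fixedPoints m').ncard + 2 = (fixedPoints m).ncard ∧
      ∀ x, x ≠ u → x ≠ w → m' x = m x := by
  classical
  have hswap : G.IsMatchingInvolution (Equiv.swap u w) := by
    refine ⟨Equiv.swap_apply_self u w, fun x hx => ?_⟩
    by_cases hxu : x = u
    · subst hxu; rwa [Equiv.swap_apply_left]
    by_cases hxw : x = w
    · subst hxw; rw [Equiv.swap_apply_right]; exact huw.symm
    · exact absurd (Equiv.swap_apply_of_ne_of_ne hxu hxw) hx
  have hmP : MapsTo m {u, w} {u, w} := by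
    rintro x (rfl | rfl) <;> simp [hu, hw]
  have hsP : MapsTo (Equiv.swap u w) {u, w} {u, w} := by
    rintro x (rfl | rfl) <;> simp
  refine ⟨_, hm.piecewise hswap hmP hsP, ?_, fun x hxu hxw => piecewise_eq_of_notMem _ _ _ ?_⟩
  · have hfm : {u, w} ∩ fixedPoints m = {u, w} :=
      inter_eq_left.2 (by rintro x (rfl | rfl) <;> assumption)
    have hfs : {u, w} ∩ fixedPoints (Equiv.swap u w) = ∅ := by
      ext x
      simp only [mem_inter_iff, mem_insert_iff, mem_singleton_iff, mem_fixedPoints, IsFixedPt,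
        mem_empty_iff_false, iff_false, not_and]
      rintro (rfl | rfl) <;> simp [huw.ne, huw.ne.symm]
    have := ncard_fixedPoints_piecewise {u, w} m (Equiv.swap u w)
    rw [hfm, hfs, ncard_pair huw.ne, ncard_empty] at this
    omega
  · simp [hxu, hxw]

end IsMatchingInvolution

theorem exists_isMaxMatchingInvolution [Finite V] (G : SimpleGraph V) :
    ∃ m, G.IsMaxMatchingInvolution m := by
  obtain ⟨m, hm, hmin⟩ := Set.exists_min_image {m | G.IsMatchingInvolution m}
    (fun m => (fixedPoints m).ncard) (toFinite _) ⟨id, isMatchingInvolution_id G⟩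
  exact ⟨m, hm, hmin⟩

namespace IsMaxMatchingInvolution

theorem of_ncard_le (hM : G.IsMaxMatchingInvolution M) (hm : G.IsMatchingInvolution m)
    (h : (fixedPoints m).ncard ≤ (fixedPoints M).ncard) : G.IsMaxMatchingInvolution m :=
  ⟨hm, fun n hn => h.trans (hM.2 n hn)⟩

theorem not_adj [Finite V] (hm : G.IsMaxMatchingInvolution m) (hu : m u = u) (hw : m w = w) :
    ¬G.Adj u w := fun huw => by
  obtain ⟨m', hm', hcard, -⟩ := hm.1.exists_augment hu hw huw
  have := hm.2 m' hm'
  omega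

theorem ncard_inter_fixedPoints_le [Finite V] [DecidablePred (· ∈ P)]
    (hM : G.IsMaxMatchingInvolution M) (hN : G.IsMatchingInvolution N) (hMP : MapsTo M P P)
    (hNP : MapsTo N P P) : (P ∩ fixedPoints M).ncard ≤ (P ∩ fixedPoints N).ncard := by
  have := hM.2 _ (hM.1.piecewise hN hMP hNP)
  have := ncard_fixedPoints_piecewise P M N
  omega

theorem piecewise [Finite V] [DecidablePred (· ∈ P)] (hM : G.IsMaxMatchingInvolution M)
    (hN : G.IsMatchingInvolution N) (hMP : MapsTo M P P) (hNP : MapsTo N P P)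
    (h : (P ∩ fixedPoints N).ncard ≤ (P ∩ fixedPoints M).ncard) :
    G.IsMaxMatchingInvolution (P.piecewise N M) := by
  refine hM.of_ncard_le (hM.1.piecewise hN hMP hNP) ?_
  have := ncard_fixedPoints_piecewise P M N
  omega

theorem restrict_piecewise [Finite V] [DecidablePred (· ∈ s)]
    (hs : ∀ x ∈ s, ∀ y, G.Adj x y → y ∈ s) (hM : G.IsMaxMatchingInvolution M) :
    (G.restrict s).IsMaxMatchingInvolution (s.piecewise M id) := by
  have hMs := hM.1.mapsTo hs
  refine ⟨⟨(Involutive.piecewise (fun _ => rfl) hM.1.1 (mapsTo_id s) hMs), fun x hx => ?_⟩,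
    fun p hp => ?_⟩
  · have hxs : x ∈ s := by_contra fun h => hx (piecewise_eq_of_notMem _ _ _ h)
    rw [piecewise_eq_of_mem _ _ _ hxs] at hx ⊢
    exact ⟨hM.1.2 x hx, hxs, hMs hxs⟩
  · have hps : MapsTo p s s := hp.mapsTo fun x _ y hxy => hxy.2.2
    have hp_eq : s.piecewise p id = p := by
      ext x
      by_cases hx : x ∈ s
      · exact piecewise_eq_of_mem _ _ _ hx
      · rw [piecewise_eq_of_notMem _ _ _ hx]
        by_contra h
        exact hx (hp.2 x (Ne.symm h)).2.1
    have h₁ := ncard_fixedPoints_piecewise s id M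
    have h₂ := ncard_fixedPoints_piecewise s id p
    have h₃ := ncard_inter_fixedPoints_le hM (hp.mono (restrict_le G s)) hMs hps
    rw [hp_eq] at h₂
    omega

end IsMaxMatchingInvolution

namespace Subgraph

open Classical in
noncomputable def partner (M : G.Subgraph) (v : V) : V :=
  if h : ∃ w, M.Adj v w then h.choose else v

theorem compl_fixedPoints_partner (M : G.Subgraph) : (fixedPoints M.partner)ᶜ = M.support := by
  ext v
  rw [mem_compl_iff, mem_fixedPoints, IsFixedPt, mem_support, partner]
  split_ifs with h
  · refine iff_of_true (fun hv => M.loopless.irrefl v ?_) h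
    have hvw := h.choose_spec
    rwa [hv] at hvw
  · exact iff_of_false (not_not.2 rfl) h

theorem IsMatching.isMatchingInvolution_partner {M : G.Subgraph} (hM : M.IsMatching) :
    G.IsMatchingInvolution M.partner := by
  have hadj {v : V} (h : ∃ w, M.Adj v w) : M.Adj v (M.partner v) := by
    rw [partner, dif_pos h]
    exact h.choose_spec
  refine ⟨fun v => ?_, fun v hv => M.adj_sub (hadj ?_)⟩
  · by_cases h : ∃ w, M.Adj v w
    · have hv := hadj h
      exact (hM (M.edge_vert hv.symm)).unique (hadj ⟨v, hv.symm⟩) hv.symm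
    · have hv : M.partner v = v := by rw [partner, dif_neg h]
      rw [hv, hv]
  · by_contra h
    rw [partner, dif_neg h] at hv
    exact hv rfl

end Subgraph

namespace IsMatchingInvolution

def toSubgraph (hm : G.IsMatchingInvolution m) : G.Subgraph where
  verts := (fixedPoints m)ᶜ
  Adj x y := m x = y ∧ x ≠ y
  adj_sub := by
    rintro x _ ⟨rfl, h⟩
    exact hm.2 x (Ne.symm h)
  edge_vert := by
    rintro x _ ⟨rfl, h⟩
    exact Ne.symm h
  symm := ⟨fun x y ⟨h, hne⟩ => ⟨h ▸ hm.1 x, hne.symm⟩⟩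

theorem toSubgraph_isMatching (hm : G.IsMatchingInvolution m) : hm.toSubgraph.IsMatching :=
  fun x hx => ⟨m x, ⟨rfl, Ne.symm hx⟩, fun _ h => h.1.symm⟩

theorem support_toSubgraph (hm : G.IsMatchingInvolution m) :
    hm.toSubgraph.support = (fixedPoints m)ᶜ :=
  hm.toSubgraph_isMatching.support_eq_verts

theorem induce (hm : G.IsMatchingInvolution m) (hs : MapsTo m s s) :
    (G.induce s).IsMatchingInvolution (hs.restrict m s s) :=
  ⟨fun x => Subtype.ext (hm.1 x), fun x hx => hm.2 x fun h => hx (Subtype.ext h)⟩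

theorem exists_isPerfectMatching_induce (hm : G.IsMatchingInvolution m)
    (hs : ∀ x ∈ s, m x ∈ s ∧ m x ≠ x) :
    ∃ M : (G.induce s).Subgraph, M.IsPerfectMatching := by
  have hms : MapsTo m s s := fun x hx => (hs x hx).1
  refine ⟨(hm.induce hms).toSubgraph, (hm.induce hms).toSubgraph_isMatching, fun x => ?_⟩
  exact fun h => (hs x x.2).2 (congrArg Subtype.val h)

end IsMatchingInvolution

theorem mem_Dset_iff [Finite V] :
    v ∈ Dset G ↔ ∃ m, G.IsMaxMatchingInvolution m ∧ m v = v := by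
  have hcompl {s t : Set V} : sᶜ.ncard ≤ tᶜ.ncard ↔ t.ncard ≤ s.ncard := by
    rw [ncard_compl, ncard_compl]
    have := ncard_le_card s
    have := ncard_le_card t
    omega
  constructor
  · rintro ⟨M, ⟨hM, hmax⟩, hv⟩
    refine ⟨M.partner, ⟨hM.isMatchingInvolution_partner, fun n hn => ?_⟩, ?_⟩
    · have := hmax _ hn.toSubgraph_isMatching
      rwa [hn.support_toSubgraph, ← M.compl_fixedPoints_partner, hcompl] at this
    · exact not_not.1 fun h => hv (M.compl_fixedPoints_partner ▸ h)
  · rintro ⟨m, ⟨hm, hmax⟩, hv⟩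
    refine ⟨hm.toSubgraph, ⟨hm.toSubgraph_isMatching, fun N hN => ?_⟩, ?_⟩
    · rw [hm.support_toSubgraph, ← N.compl_fixedPoints_partner, hcompl]
      exact hmax _ hN.isMatchingInvolution_partner
    · rw [hm.support_toSubgraph]
      exact fun h => h hv

/-- Gallai's lemma. -/
theorem eq_of_reachable_of_Dset_eq_univ [Finite V] (hD : Dset G = univ)
    (hm : G.IsMaxMatchingInvolution m) (hu : m u = u) (hw : m w = w) (huw : G.Reachable u w) :
    u = w := by
  classical
  induction hd : G.dist u w using Nat.strong_induction_on generalizing m u w with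
  | _ d ih =>
  by_contra hne
  obtain ⟨p, hp⟩ := huw.exists_walk_length_eq_dist
  cases p with
  | nil => exact hne rfl
  | @cons _ t _ hut q =>
  have htw : t ≠ w := by
    rintro rfl
    exact hm.not_adj hu hw hut
  have hq : q.length ≠ 0 := fun h => htw (q.eq_of_length_eq_zero h)
  rw [Walk.length_cons, hd] at hp
  have hdtw : G.dist t w < d := (dist_le q).trans_lt (by omega)
  have hdut : G.dist u t < d := by
    rw [dist_eq_one_iff_adj.2 hut]
    omega
  obtain ⟨N, hN, hNt⟩ := mem_Dset_iff.1 (hD ▸ mem_univ t)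
  by_cases hNu : N u = u
  · exact hut.ne (ih _ hdut hN hNu hNt hut.reachable rfl)
  obtain ⟨P, e, heP, huP, heu, hNP, hmP, hP⟩ := exists_alternating_path hN.1.1 hm.1.1 hu hNu
  rcases hP with ⟨hPN, hPm⟩ | ⟨hPN, hPm⟩
  · have hcard : (P ∩ fixedPoints N).ncard = (P ∩ fixedPoints m).ncard := by
      rw [hPN, hPm, ncard_singleton, ncard_singleton]
    by_cases het : e = t
    · subst het
      have hwP : w ∉ P := fun hwP => hne (hPm.subset ⟨hwP, hw⟩).symm
      refine htw (ih _ hdtw (hm.piecewise hN.1 hmP hNP hcard.le) ?_ ?_ q.reachable rfl)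
      · rw [piecewise_eq_of_mem _ _ _ heP, hNt]
      · rw [piecewise_eq_of_notMem _ _ _ hwP, hw]
    · have htP : t ∉ P := fun htP => het (hPN.subset ⟨htP, hNt⟩).symm
      refine hut.ne (ih _ hdut (hN.piecewise hm.1 hNP hmP hcard.ge) ?_ ?_ hut.reachable rfl)
      · rw [piecewise_eq_of_mem _ _ _ huP, hu]
      · rw [piecewise_eq_of_notMem _ _ _ htP, hNt]
  · have := hm.ncard_inter_fixedPoints_le hN.1 hmP hNP
    rw [hPm, hPN, ncard_pair heu.symm, ncard_empty] at this
    omega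

section Deletion

variable {a : V}

theorem isMatchingInvolution_restrict_compl_singleton_iff :
    (G.restrict {a}ᶜ).IsMatchingInvolution m ↔ G.IsMatchingInvolution m ∧ m a = a := by
  refine ⟨fun hm => ⟨hm.mono (restrict_le G _), by_contra fun h => (hm.2 a h).2.1 rfl⟩,
    fun ⟨hm, ha⟩ => ⟨hm.1, fun x hx => ⟨hm.2 x hx, ?_, ?_⟩⟩⟩
  · rintro rfl
    exact hx ha
  · intro h
    have hxa : x = a := by rw [← hm.1 x, show m x = a from h, ha]
    exact hx (by rw [hxa, ha])

theorem ncard_fixedPoints_add_two_le {p : V → V} [Finite V] (ha : a ∉ Dset G)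
    (hM : G.IsMaxMatchingInvolution M) (hp : G.IsMatchingInvolution p) (hpa : p a = a) :
    (fixedPoints M).ncard + 2 ≤ (fixedPoints p).ncard := by
  have hle := hM.2 p hp
  have hne : (fixedPoints M).ncard ≠ (fixedPoints p).ncard := fun h =>
    ha (mem_Dset_iff.2 ⟨p, hM.of_ncard_le hp h.ge, hpa⟩)
  have hpar := hp.ncard_fixedPoints_modEq hM.1
  unfold Nat.ModEq at hpar
  omega

theorem Dset_subset_Dset_restrict_compl_singleton [Finite V] (ha : a ∉ Dset G) :
    Dset G ⊆ Dset (G.restrict {a}ᶜ) := by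
  classical
  intro v hv
  obtain ⟨M, hM, hMv⟩ := mem_Dset_iff.1 hv
  have hMa : M a ≠ a := fun h => ha (mem_Dset_iff.2 ⟨M, hM, h⟩)
  have hP : MapsTo M {a, M a} {a, M a} := by
    rintro x (rfl | rfl) <;> simp [hM.1.1 _]
  have hcard := ncard_fixedPoints_piecewise {a, M a} M id
  have hfix : {a, M a} ∩ fixedPoints M = ∅ := by
    ext x
    simp only [mem_inter_iff, mem_insert_iff, mem_singleton_iff, mem_fixedPoints, IsFixedPt,
      mem_empty_iff_false, iff_false, not_and]
    rintro (rfl | rfl)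
    · exact hMa
    · rw [hM.1.1]
      exact Ne.symm hMa
  rw [hfix, fixedPoints_id, inter_univ, ncard_empty, ncard_pair (Ne.symm hMa)] at hcard
  have hvP : v ∉ ({a, M a} : Set V) := by
    rintro (rfl | rfl)
    · exact hMa hMv
    · rw [hM.1.1] at hMv
      exact hMa hMv.symm
  refine mem_Dset_iff.2 ⟨_, ⟨isMatchingInvolution_restrict_compl_singleton_iff.2
    ⟨hM.1.piecewise (isMatchingInvolution_id G) hP (mapsTo_id _),
      piecewise_eq_of_mem _ _ _ (mem_insert a _)⟩, fun p hp => ?_⟩,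
    by rw [piecewise_eq_of_notMem _ _ _ hvP, hMv]⟩
  obtain ⟨hpG, hpa⟩ := isMatchingInvolution_restrict_compl_singleton_iff.1 hp
  have := ncard_fixedPoints_add_two_le ha hM hpG hpa
  omega

theorem Dset_restrict_compl_singleton_subset [Finite V] (ha : a ∉ Dset G) (hu : u ∈ Dset G)
    (hua : G.Adj u a) :
    Dset (G.restrict {a}ᶜ) ⊆ insert a (Dset G) := by
  classical
  intro v hv
  rcases eq_or_ne v a with rfl | hva
  · exact mem_insert _ _
  refine mem_insert_of_mem _ (mem_Dset_iff.2 ?_)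
  obtain ⟨N, hN, hNv⟩ := mem_Dset_iff.1 hv
  obtain ⟨hNG, hNa⟩ := isMatchingInvolution_restrict_compl_singleton_iff.1 hN.1
  obtain ⟨M, hM, hMu⟩ := mem_Dset_iff.1 hu
  by_cases hMv : M v = v
  · exact ⟨M, hM, hMv⟩
  obtain ⟨P, e, heP, hvP, hev, hMP, hNP, hP⟩ := exists_alternating_path hM.1.1 hNG.1 hNv hMv
  rcases hP with ⟨hPM, hPN⟩ | ⟨hPM, hPN⟩
  · have hcard : (P ∩ fixedPoints N).ncard ≤ (P ∩ fixedPoints M).ncard := by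
      rw [hPM, hPN, ncard_singleton, ncard_singleton]
    refine ⟨_, hM.piecewise hNG hMP hNP hcard, ?_⟩
    rw [piecewise_eq_of_mem _ _ _ hvP, hNv]
  by_cases haP : a ∈ P
  · -- the path ends at `a`, and the edge `u a` extends it to an augmenting path
    have huP : u ∉ P := fun huP => hPM.subset ⟨huP, hMu⟩
    have hcard := ncard_fixedPoints_piecewise P M N
    rw [hPM, hPN, ncard_empty, ncard_pair hev.symm] at hcard
    obtain ⟨M', hM', hcard', hM'v⟩ := (hM.1.piecewise hNG hMP hNP).exists_augment
      (by rw [piecewise_eq_of_notMem _ _ _ huP, hMu])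
      (by rw [piecewise_eq_of_mem _ _ _ haP, hNa]) hua
    refine ⟨M', hM.of_ncard_le hM' (by omega), ?_⟩
    rw [hM'v v (fun h => hMv (h ▸ hMu)) hva, piecewise_eq_of_mem _ _ _ hvP, hNv]
  · -- otherwise the path is augmenting for `N` in `G - a`
    have hN' := hNG.piecewise hM.1 hNP hMP
    have hmax := hN.2 _ (isMatchingInvolution_restrict_compl_singleton_iff.2
      ⟨hN', by rw [piecewise_eq_of_notMem _ _ _ haP, hNa]⟩)
    have hcard := ncard_fixedPoints_piecewise P N M
    rw [hPM, hPN, ncard_empty, ncard_pair hev.symm] at hcard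
    omega

/-- The Gallai–Edmonds stability lemma for a vertex `a ∈ A(G)`; here `G - a` keeps `a` as an
isolated vertex. -/
theorem Dset_restrict_compl_singleton [Finite V] (ha : a ∉ Dset G) (hu : u ∈ Dset G)
    (hua : G.Adj u a) :
    Dset (G.restrict {a}ᶜ) = insert a (Dset G) := by
  refine (Dset_restrict_compl_singleton_subset ha hu hua).antisymm
    (insert_subset ?_ (Dset_subset_Dset_restrict_compl_singleton ha))
  obtain ⟨m, hm⟩ := exists_isMaxMatchingInvolution (G.restrict {a}ᶜ)
  exact mem_Dset_iff.2 ⟨m, hm, (isMatchingInvolution_restrict_compl_singleton_iff.1 hm.1).2⟩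

end Deletion

theorem Dset_restrict_eq_univ [Finite V] (hs : ∀ x ∈ s, ∀ y, G.Adj x y → y ∈ s)
    (hsD : s ⊆ Dset G) : Dset (G.restrict s) = univ := by
  classical
  refine eq_univ_of_forall fun x => mem_Dset_iff.2 ?_
  by_cases hx : x ∈ s
  · obtain ⟨M, hM, hMx⟩ := mem_Dset_iff.1 (hsD hx)
    exact ⟨_, hM.restrict_piecewise hs, by rw [piecewise_eq_of_mem _ _ _ hx, hMx]⟩
  · obtain ⟨m, hm⟩ := exists_isMaxMatchingInvolution (G.restrict s)
    exact ⟨m, hm, by_contra fun h => hx (hm.1.2 x h).2.1⟩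

theorem exists_isMatchingInvolution_restrict_Dset [Finite V] (G : SimpleGraph V)
    (hv : v ∈ Dset G) :
    ∃ m, (G.restrict (Dset G)).IsMatchingInvolution m ∧
      ∀ w, (G.restrict (Dset G)).Reachable v w → (m w = w ↔ w = v) := by
  induction hn : (Dset G)ᶜ.ncard using Nat.strong_induction_on generalizing G with
  | _ n ih =>
  by_cases hA : ∃ a ∉ Dset G, ∃ u ∈ Dset G, G.Adj u a
  · obtain ⟨a, ha, u, hu, hua⟩ := hA
    have hD := Dset_restrict_compl_singleton ha hu hua
    have hlt : (Dset (G.restrict {a}ᶜ))ᶜ.ncard < n := by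
      rw [hD, ← hn]
      exact ncard_lt_ncard (compl_lt_compl_iff_lt.2 (ssubset_insert ha))
    have hG : (G.restrict {a}ᶜ).restrict (Dset (G.restrict {a}ᶜ)) = G.restrict (Dset G) := by
      rw [hD, restrict_restrict, inter_insert_of_notMem (s := {a}ᶜ) (by simp),
        inter_eq_right.2 (subset_compl_singleton_iff.2 ha)]
    simpa only [hG] using ih _ hlt (G.restrict {a}ᶜ) (hD ▸ mem_insert_of_mem a hv) rfl
  · push Not at hA
    have hD : Dset (G.restrict (Dset G)) = univ :=
      Dset_restrict_eq_univ (fun x hx y hxy => by_contra fun hy => hA y hy x hx hxy) subset_rfl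
    obtain ⟨m, hm, hmv⟩ := mem_Dset_iff.1 (hD ▸ mem_univ v)
    refine ⟨m, hm.1, fun w hw => ⟨fun hmw => ?_, fun h => h ▸ hmv⟩⟩
    exact (eq_of_reachable_of_Dset_eq_univ hD hm hmv hmw hw).symm

end SimpleGraph

end

open Set SimpleGraph in
/-- Every component of the subgraph induced by `D(G)` is factor-critical: removing
any vertex of the component leaves a graph with a perfect matching. -/
theorem stmt7 {V : Type*} [Fintype V] (G : SimpleGraph V)
    (c : (G.induce (Dset G)).ConnectedComponent)
    (v : Dset G) (hv : (G.induce (Dset G)).connectedComponentMk v = c) :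
    ∃ M : (SimpleGraph.induce
        {w : Dset G | (G.induce (Dset G)).connectedComponentMk w = c ∧ w ≠ v}
        (G.induce (Dset G))).Subgraph,
      M.IsPerfectMatching := by
  obtain ⟨m, hm, hfix⟩ := G.exists_isMatchingInvolution_restrict_Dset v.2
  have hmD : MapsTo m (Dset G) (Dset G) := hm.mapsTo fun _ _ _ hxy => hxy.2.2
  have hm' := (hm.mono (G.restrict_le _)).induce hmD
  have hmv : m v = v := (hfix v (Reachable.refl _)).2 rfl
  refine hm'.exists_isPerfectMatching_induce fun w ⟨hwc, hwv⟩ => ?_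
  have hreach := (ConnectedComponent.exact (hv.trans hwc.symm)).restrict_of_induce
  have hmw : hmD.restrict m _ _ w ≠ w := fun h =>
    hwv (Subtype.ext ((hfix w hreach).1 (congrArg Subtype.val h)))
  refine ⟨⟨(ConnectedComponent.connectedComponentMk_eq_of_adj (hm'.2 w hmw)).symm.trans hwc,
    fun h => hwv (Subtype.ext ?_)⟩, hmw⟩
  rw [← hm.1 w, show m w = v from congrArg Subtype.val h, hmv]
end

section
/- Let P be a nonnegative |A| × |D| matrix whose every row sums to exactly 1 and every column sums to at most 1. Then P can be written as a finite convex combination P = ∑_i δ_i M_i with δ_i > 0, ∑_i δ_i = 1, where each M_i is a 0-1 matrix with exactly one 1 in each row and at most one 1 in each column, and M_i has support contained in the support of P. -/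
/-!
Pad `P` to a square doubly stochastic matrix: keep its rows and add `|D| - |A|` copies of the
vector of column deficits `1 - ∑ᵢ P i j`, normalised to sum to one. By Birkhoff's theorem the
padded matrix is a convex combination of permutation matrices; restricting each of them to the
rows of `P` gives the required partial permutation matrices, and a summand with positive weight
can only be nonzero where `P` is.
-/

open Finset Function

theorem sum_equivFin_support_symm {ι R M : Type*} [Fintype ι] [Zero R] [AddCommMonoid M]
    (w : ι → R) [DecidablePred (w · ≠ 0)] (h : ι → M) (hh : ∀ σ, w σ = 0 → h σ = 0) :
    ∑ i, h ((Fintype.equivFin {σ // w σ ≠ 0}).symm i) = ∑ σ, h σ := by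
  rw [Equiv.sum_comp (Fintype.equivFin {σ // w σ ≠ 0}).symm fun σ => h σ,
    ← sum_subtype (univ.filter (w · ≠ 0)) (by simp), sum_filter_of_ne]
  exact fun σ _ => mt (hh σ)

namespace Matrix

variable {m n : Type*}

section Submatrix

variable [Fintype n] {R : Type*} [Semiring R] [PartialOrder R] [IsOrderedRing R] [DecidableEq n]
  {B : Matrix n n R}

theorem sum_submatrix_row_of_mem_doublyStochastic (hB : B ∈ doublyStochastic R n) (f : m → n)
    (i : m) : ∑ j, B.submatrix f id i j = 1 :=
  sum_row_of_mem_doublyStochastic hB (f i)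

theorem sum_submatrix_col_le_one_of_mem_doublyStochastic [Fintype m]
    (hB : B ∈ doublyStochastic R n) (f : m ↪ n) (j : n) : ∑ i, B.submatrix f id i j ≤ 1 := by
  calc ∑ i, B.submatrix f id i j = ∑ k ∈ univ.map f, B k j := by simp
    _ ≤ ∑ k, B k j :=
      sum_le_univ_sum_of_nonneg fun _ => nonneg_of_mem_doublyStochastic hB
    _ = 1 := sum_col_of_mem_doublyStochastic hB j

end Submatrix

section Padding

variable [Fintype m] [Fintype n] {P : Matrix m n ℝ}

theorem sum_one_sub_sum_col_eq (hrow : ∀ i, ∑ j, P i j = 1) :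
    ∑ j, (1 - ∑ i, P i j) = (Fintype.card n : ℝ) - Fintype.card m := by
  rw [sum_sub_distrib, sum_comm]
  simp [hrow]

theorem card_le_card_of_sum_row_eq_one_of_sum_col_le_one (hrow : ∀ i, ∑ j, P i j = 1)
    (hcol : ∀ j, ∑ i, P i j ≤ 1) : Fintype.card m ≤ Fintype.card n := by
  have hdef : 0 ≤ ∑ j, (1 - ∑ i, P i j) := sum_nonneg fun j _ => sub_nonneg.2 (hcol j)
  rw [sum_one_sub_sum_col_eq hrow] at hdef
  exact_mod_cast sub_nonneg.1 hdef

/-- When `card m = card n` the embedding is onto, so the division by zero never shows up. -/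
noncomputable def padRows (P : Matrix m n ℝ) (f : m ↪ n) : Matrix n n ℝ :=
  extend f P fun _ j => (1 - ∑ i, P i j) / ((Fintype.card n : ℝ) - Fintype.card m)

theorem padRows_apply_embedding (f : m ↪ n) (i : m) : padRows P f (f i) = P i :=
  f.injective.extend_apply _ _ i

theorem padRows_apply_of_notMem_range (f : m ↪ n) {k : n} (hk : k ∉ univ.map f) :
    padRows P f k = fun j => (1 - ∑ i, P i j) / ((Fintype.card n : ℝ) - Fintype.card m) :=
  extend_apply' _ _ k fun ⟨i, hi⟩ => hk (hi ▸ mem_map_of_mem f (mem_univ i))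

theorem padRows_mem_doublyStochastic [DecidableEq n] (f : m ↪ n) (hpos : ∀ i j, 0 ≤ P i j)
    (hrow : ∀ i, ∑ j, P i j = 1) (hcol : ∀ j, ∑ i, P i j ≤ 1) :
    padRows P f ∈ doublyStochastic ℝ n := by
  set N : ℝ := (Fintype.card n : ℝ) - Fintype.card m
  have hdef : ∑ j, (1 - ∑ i, P i j) = N := sum_one_sub_sum_col_eq hrow
  have hdef_nonneg : ∀ j, 0 ≤ 1 - ∑ i, P i j := fun j => sub_nonneg.2 (hcol j)
  have hcard : (((univ.map f)ᶜ).card : ℝ) = N := by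
    rw [card_compl, card_map, card_univ,
      Nat.cast_sub (card_le_card_of_sum_row_eq_one_of_sum_col_le_one hrow hcol)]
  have hscale : ∀ j, N * ((1 - ∑ i, P i j) / N) = 1 - ∑ i, P i j := fun j => by
    rcases eq_or_ne N 0 with hN | hN
    · have : 1 - ∑ i, P i j ≤ N := hdef ▸ single_le_sum (fun j _ => hdef_nonneg j) (mem_univ j)
      rw [hN, zero_mul]
      linarith [hdef_nonneg j]
    · exact mul_div_cancel₀ _ hN
  refine mem_doublyStochastic_iff_sum.2 ⟨fun k j => ?_, fun k => ?_, fun j => ?_⟩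
  · by_cases hk : k ∈ univ.map f
    · obtain ⟨i, -, rfl⟩ := mem_map.1 hk
      rw [padRows_apply_embedding]
      exact hpos i j
    · rw [padRows_apply_of_notMem_range f hk]
      exact div_nonneg (hdef_nonneg j) (hcard.symm ▸ Nat.cast_nonneg _ : 0 ≤ N)
  · by_cases hk : k ∈ univ.map f
    · obtain ⟨i, -, rfl⟩ := mem_map.1 hk
      rw [padRows_apply_embedding]
      exact hrow i
    · have hN : N ≠ 0 := hcard ▸ Nat.cast_ne_zero.2 (card_ne_zero_of_mem (mem_compl.2 hk))
      rw [padRows_apply_of_notMem_range f hk, ← sum_div, hdef, div_self hN]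
  · calc ∑ k, padRows P f k j
        = ∑ k ∈ univ.map f, padRows P f k j + ∑ k ∈ (univ.map f)ᶜ, padRows P f k j :=
          (sum_add_sum_compl _ _).symm
      _ = ∑ i, P i j + N * ((1 - ∑ i, P i j) / N) := by
          rw [sum_map, ← hcard, ← nsmul_eq_mul, ← sum_const]
          congr 1
          · simp only [padRows_apply_embedding]
          · refine sum_congr rfl fun k hk => ?_
            rw [padRows_apply_of_notMem_range f (mem_compl.1 hk), hcard]
      _ = 1 := by rw [hscale]; ring

end Padding

theorem apply_ne_zero_of_eq_sum_smul {ι : Type*} [Fintype ι] {P : Matrix m n ℝ} {w : ι → ℝ}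
    {M : ι → Matrix m n ℝ} (hP : P = ∑ σ, w σ • M σ) (hw : ∀ σ, 0 ≤ w σ)
    (hM : ∀ σ r c, 0 ≤ M σ r c) {σ : ι} (hσ : 0 < w σ) {r : m} {c : n} (h : M σ r c ≠ 0) :
    P r c ≠ 0 := by
  rw [hP, Matrix.sum_apply]
  exact (sum_pos' (fun τ _ => mul_nonneg (hw τ) (hM τ r c))
    ⟨σ, mem_univ _, mul_pos hσ ((hM σ r c).lt_of_ne' h)⟩).ne'

end Matrix

open Matrix

/-- Rectangular Birkhoff–von Neumann theorem: a nonnegative matrix whose rows each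
sum to 1 and whose columns each sum to at most 1 is a finite convex combination of
0-1 matrices with exactly one 1 per row and at most one 1 per column, each supported
inside the support of `P`. -/
theorem stmt8 {a d : ℕ} (P : Matrix (Fin a) (Fin d) ℝ)
    (hpos : ∀ i j, 0 ≤ P i j)
    (hrow : ∀ i, ∑ j, P i j = 1)
    (hcol : ∀ j, ∑ i, P i j ≤ 1) :
    ∃ (k : ℕ) (δ : Fin k → ℝ) (M : Fin k → Matrix (Fin a) (Fin d) ℝ),
      (∀ i, 0 < δ i) ∧ (∑ i, δ i = 1) ∧ P = ∑ i, δ i • M i ∧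
      (∀ i r c, M i r c = 0 ∨ M i r c = 1) ∧
      (∀ i r, ∑ c, M i r c = 1) ∧
      (∀ i c, ∑ r, M i r c ≤ 1) ∧
      (∀ i r c, M i r c ≠ 0 → P r c ≠ 0) := by
  classical
  obtain ⟨f⟩ : Nonempty (Fin a ↪ Fin d) := Embedding.nonempty_of_card_le <| by
    simpa using card_le_card_of_sum_row_eq_one_of_sum_col_le_one hrow hcol
  obtain ⟨w, hw0, hw1, hwB⟩ :=
    exists_eq_sum_perm_of_mem_doublyStochastic (padRows_mem_doublyStochastic f hpos hrow hcol)
  set M : Equiv.Perm (Fin d) → Matrix (Fin a) (Fin d) ℝ :=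
    fun σ => (σ.permMatrix ℝ).submatrix f id
  have hP : P = ∑ σ, w σ • M σ := by
    ext r c
    rw [← padRows_apply_embedding (P := P) f r, ← hwB]
    simp [M, Matrix.sum_apply]
  have hM_nonneg : ∀ σ r c, 0 ≤ M σ r c := fun σ r c =>
    nonneg_of_mem_doublyStochastic permMatrix_mem_doublyStochastic
  have hw_pos : ∀ σ, w σ ≠ 0 → 0 < w σ := fun σ h => (hw0 σ).lt_of_ne' h
  set e := (Fintype.equivFin {σ // w σ ≠ 0}).symm
  refine ⟨_, fun i => w (e i), fun i => M (e i), fun i => hw_pos _ (e i).2, ?_, ?_,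
    fun i r c => ?_, fun i r => ?_, fun i c => ?_, fun i r c hM => ?_⟩
  · rw [sum_equivFin_support_symm w w fun _ => id, hw1]
  · rw [sum_equivFin_support_symm w (fun σ => w σ • M σ) fun σ h => by simp [h]]
    exact hP
  · by_cases h : (e i : Equiv.Perm (Fin d)) (f r) = c <;>
      simp [M, Equiv.Perm.permMatrix, PEquiv.toMatrix_apply, h]
  · exact sum_submatrix_row_of_mem_doublyStochastic permMatrix_mem_doublyStochastic f r
  · exact sum_submatrix_col_le_one_of_mem_doublyStochastic permMatrix_mem_doublyStochastic f c
  · exact apply_ne_zero_of_eq_sum_smul hP hw0 hM_nonneg (hw_pos _ (e i).2) hM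
end

section
/- Let G be a directed graph with a distinguished set A of NDD vertices and let P be a packing of vertex-disjoint 2-paths each starting at a vertex of A. If there exists S ⊆ A with |S| − |M(S)| = exp(P), where M(S) is a maximum matching among second-arc edges of 2-paths starting in S and exp(P) is the number of A-vertices not covered by P, then P covers the maximum possible number of non-A vertices among all such packings. -/
/-- `(a,u,v)` is a 2-path starting at the NDD `a ∈ A` through non-NDD vertices `u, v`. -/
def Is2Path {V : Type*} (E : V → V → Prop) (A : Finset V) (t : V × V × V) : Prop :=
  t.1 ∈ A ∧ t.2.1 ∉ A ∧ t.2.2 ∉ A ∧ t.2.1 ≠ t.2.2 ∧ E t.1 t.2.1 ∧ E t.2.1 t.2.2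

/-- A packing of vertex-disjoint 2-paths starting at NDDs. -/
def Is2PathPacking {V : Type*} (E : V → V → Prop) (A : Finset V)
    (P : Finset (V × V × V)) : Prop :=
  (∀ t ∈ P, Is2Path E A t) ∧
  ∀ t ∈ P, ∀ t' ∈ P, t ≠ t' →
    ∀ v ∈ ({t.1, t.2.1, t.2.2} : Set V), v ∉ ({t'.1, t'.2.1, t'.2.2} : Set V)

/-- Number of NDDs exposed (not starting any path) in `P`. -/
def exposedCount {V : Type*} [DecidableEq V] (A : Finset V) (P : Finset (V × V × V)) : ℕ :=
  (A.filter (fun a => ∀ t ∈ P, t.1 ≠ a)).card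

/-- The maximum size of a matching among second-arc edges of 2-paths starting in `S`. -/
noncomputable def secondArcMatchNum {V : Type*} (E : V → V → Prop) (A : Finset V)
    (S : Finset V) : ℕ :=
  sSup {k : ℕ | ∃ M : Finset (V × V),
    (∀ e ∈ M, ∃ a ∈ S, Is2Path E A (a, e.1, e.2)) ∧
    (∀ e ∈ M, ∀ e' ∈ M, e ≠ e' →
      ∀ v ∈ ({e.1, e.2} : Set V), v ∉ ({e'.1, e'.2} : Set V)) ∧
    M.card = k}

lemma fstInjOn {V : Type*} {E : V → V → Prop} {A : Finset V} {P : Finset (V × V × V)}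
    (hP : Is2PathPacking E A P) : Set.InjOn Prod.fst (P : Set (V × V × V)) := by
  intro t ht t' ht' h
  by_contra hne
  exact hP.2 t ht t' ht' hne t.1 (by simp) (by simp [h])

lemma sndInjOn {V : Type*} {E : V → V → Prop} {A : Finset V} {P : Finset (V × V × V)}
    (hP : Is2PathPacking E A P) :
    Set.InjOn (fun t : V × V × V => t.2.1) (P : Set (V × V × V)) := by
  intro t ht t' ht' h
  by_contra hne
  exact hP.2 t ht t' ht' hne t.2.1 (by simp) (by simp [h])

/-- Certificate of optimality for 2-path packings: if some `S ⊆ A` has deficiency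
`|S| − |M(S)|` equal to the number of exposed NDDs of `P`, then `P` covers the
maximum possible number of non-NDD vertices, i.e. `P` is a maximum packing. -/
theorem stmt12 {V : Type*} [Fintype V] [DecidableEq V]
    (E : V → V → Prop) (A : Finset V) (P : Finset (V × V × V))
    (hP : Is2PathPacking E A P)
    (S : Finset V) (hS : S ⊆ A)
    (hcert : (S.card : ℤ) - secondArcMatchNum E A S = exposedCount A P) :
    ∀ Q : Finset (V × V × V), Is2PathPacking E A Q → 2 * Q.card ≤ 2 * P.card := by
  classical
  intro Q hQ
  -- exposedCount facts for P
  have himP : P.image Prod.fst ⊆ A := by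
    intro a ha
    obtain ⟨t, ht, rfl⟩ := Finset.mem_image.1 ha
    exact (hP.1 t ht).1
  have hexp : exposedCount A P = A.card - (P.image Prod.fst).card := by
    unfold exposedCount
    rw [← Finset.card_sdiff_of_subset himP]
    congr 1
    ext a
    constructor
    · intro ha
      simp only [Finset.mem_filter] at ha
      refine Finset.mem_sdiff.2 ⟨ha.1, fun hc => ?_⟩
      obtain ⟨t, ht, rfl⟩ := Finset.mem_image.1 hc
      exact ha.2 t ht rfl
    · intro ha
      rw [Finset.mem_sdiff] at ha
      simp only [Finset.mem_filter]
      exact ⟨ha.1, fun t ht heq => ha.2 (Finset.mem_image.2 ⟨t, ht, heq⟩)⟩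
  have hPcard : P.card = (P.image Prod.fst).card :=
    (Finset.card_image_of_injOn (fstInjOn hP)).symm
  have himPle : (P.image Prod.fst).card ≤ A.card := Finset.card_le_card himP
  -- Q split
  set Q1 := Q.filter (fun t => t.1 ∈ S) with hQ1
  set Q2 := Q.filter (fun t => ¬ t.1 ∈ S) with hQ2
  have hsplit : Q1.card + Q2.card = Q.card :=
    Finset.card_filter_add_card_filter_not _
  -- Q2 bound
  have hQ2sub : Q2.image Prod.fst ⊆ A \ S := by
    intro a ha
    obtain ⟨t, ht, rfl⟩ := Finset.mem_image.1 ha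
    rw [Finset.mem_filter] at ht
    exact Finset.mem_sdiff.2 ⟨(hQ.1 t ht.1).1, ht.2⟩
  have hQ2le : Q2.card ≤ (A \ S).card := by
    calc Q2.card = (Q2.image Prod.fst).card :=
          (Finset.card_image_of_injOn ((fstInjOn hQ).mono (by
            intro t ht; exact Finset.mem_of_mem_filter t ht))).symm
      _ ≤ (A \ S).card := Finset.card_le_card hQ2sub
  have hAS : S.card + (A \ S).card = A.card := by
    have := Finset.card_le_card hS
    rw [Finset.card_sdiff_of_subset hS]; omega
  -- Q1 bound via matching
  have hQ1le : Q1.card ≤ secondArcMatchNum E A S := by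
    set M := Q1.image (fun t => (t.2.1, t.2.2)) with hM
    have hsubQ : ∀ t ∈ Q1, t ∈ Q := fun t ht => Finset.mem_of_mem_filter t ht
    have hcardM : M.card = Q1.card := by
      apply Finset.card_image_of_injOn
      intro t ht t' ht' h
      have : t.2.1 = t'.2.1 := congrArg Prod.fst h
      exact sndInjOn hQ (hsubQ t ht) (hsubQ t' ht') this
    have hmem : (Q1.card : ℕ) ∈ {k : ℕ | ∃ M : Finset (V × V),
        (∀ e ∈ M, ∃ a ∈ S, Is2Path E A (a, e.1, e.2)) ∧
        (∀ e ∈ M, ∀ e' ∈ M, e ≠ e' →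
          ∀ v ∈ ({e.1, e.2} : Set V), v ∉ ({e'.1, e'.2} : Set V)) ∧
        M.card = k} := by
      refine ⟨M, ?_, ?_, hcardM⟩
      · intro e he
        obtain ⟨t, ht, rfl⟩ := Finset.mem_image.1 he
        rw [Finset.mem_filter] at ht
        exact ⟨t.1, ht.2, hQ.1 t ht.1⟩
      · intro e he e' he' hne v hv hv'
        obtain ⟨t, ht, rfl⟩ := Finset.mem_image.1 he
        obtain ⟨t', ht', rfl⟩ := Finset.mem_image.1 he'
        have htne : t ≠ t' := by rintro rfl; exact hne rfl
        refine hQ.2 t (hsubQ t ht) t' (hsubQ t' ht') htne v ?_ ?_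
        · rcases hv with h | h <;> simp [h]
        · rcases hv' with h | h <;> simp [h]
    have hbdd : BddAbove {k : ℕ | ∃ M : Finset (V × V),
        (∀ e ∈ M, ∃ a ∈ S, Is2Path E A (a, e.1, e.2)) ∧
        (∀ e ∈ M, ∀ e' ∈ M, e ≠ e' →
          ∀ v ∈ ({e.1, e.2} : Set V), v ∉ ({e'.1, e'.2} : Set V)) ∧
        M.card = k} := by
      refine ⟨Fintype.card (V × V), ?_⟩
      rintro k ⟨M, -, -, rfl⟩
      exact Finset.card_le_univ M
    exact le_csSup hbdd hmem
  -- arithmetic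
  have hcard : exposedCount A P + (P.image Prod.fst).card = A.card := by omega
  omega
end

section
/- Let G = (V,E) be a graph, W ≥ max edge weight, and construct H by adding k = 2(ν(G) − μ) + def(G) new vertices each joined to every vertex of V by an edge of weight W, where μ satisfies ν(G)/2 ≤ μ ≤ ν(G) and def(G) = |V| − 2ν(G). Then H has a perfect matching, and the perfect matchings of H of maximum total weight are exactly those that restrict to maximum-weight matchings of G of cardinality μ together with new-vertex edges. -/
/-- A matching of `G`, given as a finite set of edges of `G` that are pairwise
vertex-disjoint. -/
def FMatching {α : Type*} (G : SimpleGraph α) (M : Finset (Sym2 α)) : Prop :=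
  (∀ e ∈ M, e ∈ G.edgeSet) ∧
  (M : Set (Sym2 α)).Pairwise (fun e f => ∀ v, v ∈ e → v ∉ f)

/-- The matching `M` is perfect: every vertex is covered. -/
def FPerfect {α : Type*} (M : Finset (Sym2 α)) : Prop := ∀ v : α, ∃ e ∈ M, v ∈ e

/-- Total weight of a matching. -/
def wsum {α : Type*} (w : Sym2 α → ℝ) (M : Finset (Sym2 α)) : ℝ := ∑ e ∈ M, w e

/-- The graph `H`: `G` together with `k` new vertices, each joined to every
original vertex (and to no new vertex). -/
def Hgraph {α : Type*} (G : SimpleGraph α) (k : ℕ) : SimpleGraph (α ⊕ Fin k) where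
  Adj x y :=
    (∃ a b, x = Sum.inl a ∧ y = Sum.inl b ∧ G.Adj a b) ∨
    (x.isLeft ∧ y.isRight) ∨ (x.isRight ∧ y.isLeft)
  symm := by
    refine ⟨?_⟩
    rintro x y (⟨a, b, rfl, rfl, hab⟩ | ⟨hx, hy⟩ | ⟨hx, hy⟩)
    · exact Or.inl ⟨b, a, rfl, rfl, hab.symm⟩
    · exact Or.inr (Or.inr ⟨hy, hx⟩)
    · exact Or.inr (Or.inl ⟨hy, hx⟩)
  loopless := by
    refine ⟨?_⟩
    rintro x (⟨a, b, rfl, hab, h⟩ | ⟨hx, hy⟩ | ⟨hx, hy⟩)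
    · exact G.loopless.irrefl a (by cases hab; exact h)
    · cases x <;> simp_all
    · cases x <;> simp_all

open Classical in
/-- Weights on edges of `H`: original edges keep the weight `w`, edges meeting a
new vertex have weight `W`. -/
noncomputable def wH {α : Type*} {k : ℕ} (w : Sym2 α → ℝ) (W : ℝ) :
    Sym2 (α ⊕ Fin k) → ℝ := fun e =>
  if h : ∃ a b : α, e = s(Sum.inl a, Sum.inl b) then
    w s(h.choose, h.choose_spec.choose) else W

/-!
The new vertices are pairwise non-adjacent, so a perfect matching of `H` matches each of
the `k` new vertices to an original vertex through its own edge of weight `W`, and its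
remaining edges form a matching of `G` covering the other `|V| - k = 2μ` vertices.
Conversely, a matching of `G` of size `μ` extends to a perfect matching of `H` by pairing
its `k` uncovered vertices with the new ones. So restriction maps the perfect matchings of
`H` onto the matchings of `G` of size `μ`, and the weight of a perfect matching is that of
its restriction plus `k W`.
-/

open Finset

namespace FMatching

variable {α : Type*} {G : SimpleGraph α} {M N : Finset (Sym2 α)}

theorem mono (h : FMatching G M) (hNM : N ⊆ M) : FMatching G N :=
  ⟨fun e he => h.1 e (hNM he), h.2.mono (by exact_mod_cast hNM)⟩

theorem eq_of_mem (h : FMatching G M) {e f : Sym2 α} {v : α} (he : e ∈ M) (hf : f ∈ M)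
    (hve : v ∈ e) (hvf : v ∈ f) : e = f := by
  by_contra hne
  exact h.2 he hf hne v hve hvf

theorem union [DecidableEq α] (hM : FMatching G M) (hN : FMatching G N)
    (hdisj : ∀ v, ∀ e ∈ M, ∀ f ∈ N, v ∈ e → v ∉ f) : FMatching G (M ∪ N) := by
  refine ⟨fun e he => (mem_union.mp he).elim (hM.1 e) (hN.1 e), ?_⟩
  rw [coe_union, Set.pairwise_union]
  exact ⟨hM.2, hN.2, fun e he f hf _ =>
    ⟨fun v hve => hdisj v e he f hf hve, fun v hvf hve => hdisj v e he f hf hve hvf⟩⟩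

theorem card_biUnion_toFinset [DecidableEq α] (h : FMatching G M) :
    #(M.biUnion Sym2.toFinset) = 2 * #M := by
  rw [card_biUnion, sum_congr rfl fun e he =>
    Sym2.card_toFinset_of_not_isDiag e (G.not_isDiag_of_mem_edgeSet (h.1 e he)),
    sum_const, smul_eq_mul, mul_comm]
  intro e he f hf hne
  simpa [Function.onFun, disjoint_left] using h.2 he hf hne

theorem two_mul_card_le [Fintype α] [DecidableEq α] (h : FMatching G M) :
    2 * #M ≤ Fintype.card α :=
  h.card_biUnion_toFinset ▸ card_le_univ _

theorem two_mul_card_eq [Fintype α] [DecidableEq α] (h : FMatching G M) (hp : FPerfect M) :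
    2 * #M = Fintype.card α := by
  have hcover : M.biUnion Sym2.toFinset = univ := eq_univ_iff_forall.mpr fun v => by
    obtain ⟨e, he, hve⟩ := hp v
    exact mem_biUnion.mpr ⟨e, he, Sym2.mem_toFinset.mpr hve⟩
  rw [← h.card_biUnion_toFinset, hcover, card_univ]

end FMatching

section Hgraph

variable {α : Type*} {k : ℕ} {G : SimpleGraph α}

theorem Sym2.mem_range_map_inl_iff {β : Type*} {e : Sym2 (α ⊕ β)} :
    e ∈ Set.range (Sym2.map Sum.inl) ↔ ∃ a b : α, e = s(Sum.inl a, Sum.inl b) := by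
  constructor
  · rintro ⟨d, rfl⟩
    induction d using Sym2.ind with | _ a b => exact ⟨a, b, Sym2.map_mk _ _ _⟩
  · rintro ⟨a, b, rfl⟩
    exact ⟨s(a, b), Sym2.map_mk _ _ _⟩

theorem Sym2.inr_notMem_map_inl {β : Type*} (j : β) (d : Sym2 α) :
    (Sum.inr j : α ⊕ β) ∉ d.map Sum.inl := by
  simp [Sym2.mem_map]

theorem Sym2.cross_notMem_range_map_inl {β : Type*} (a : α) (j : β) :
    s(Sum.inl a, Sum.inr j) ∉ Set.range (Sym2.map Sum.inl) := by
  rintro ⟨d, hd⟩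
  exact Sym2.inr_notMem_map_inl j d (hd ▸ Sym2.mem_mk_right _ _)

theorem hgraph_map_inl_mem_edgeSet {d : Sym2 α} :
    d.map Sum.inl ∈ (Hgraph G k).edgeSet ↔ d ∈ G.edgeSet := by
  induction d using Sym2.ind with | _ a b => simp [Hgraph]

theorem hgraph_cross_mem_edgeSet (a : α) (j : Fin k) :
    s(Sum.inl a, Sum.inr j) ∈ (Hgraph G k).edgeSet := by
  simp [Hgraph]

theorem hgraph_not_adj_inr_inr (i j : Fin k) : ¬ (Hgraph G k).Adj (Sum.inr i) (Sum.inr j) := by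
  simp [Hgraph]

theorem hgraph_edge_cases {e : Sym2 (α ⊕ Fin k)} (he : e ∈ (Hgraph G k).edgeSet) :
    e ∈ Set.range (Sym2.map Sum.inl) ∨ ∃ a j, e = s(Sum.inl a, Sum.inr j) := by
  induction e using Sym2.ind with | _ x y =>
  rcases x with a | i <;> rcases y with b | j
  · exact Or.inl ⟨s(a, b), Sym2.map_mk _ _ _⟩
  · exact Or.inr ⟨a, j, rfl⟩
  · exact Or.inr ⟨b, i, Sym2.eq_swap⟩
  · exact absurd he (hgraph_not_adj_inr_inr i j)

theorem wH_map_inl (w : Sym2 α → ℝ) (W : ℝ) (d : Sym2 α) :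
    wH (k := k) w W (d.map Sum.inl) = w d := by
  have h : ∃ a b : α, d.map Sum.inl = s((Sum.inl a : α ⊕ Fin k), Sum.inl b) :=
    Sym2.mem_range_map_inl_iff.mp ⟨d, rfl⟩
  rw [wH, dif_pos h]
  congr 1
  apply Sym2.map.injective (Sum.inl_injective (β := Fin k))
  rw [Sym2.map_mk]
  exact h.choose_spec.choose_spec.symm

theorem wH_of_notMem_range (w : Sym2 α → ℝ) (W : ℝ) {e : Sym2 (α ⊕ Fin k)}
    (he : e ∉ Set.range (Sym2.map Sum.inl)) : wH w W e = W := by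
  rw [wH, dif_neg (Sym2.mem_range_map_inl_iff.not.mp he)]

end Hgraph

section Restrict

variable {α : Type*} {k : ℕ} {G : SimpleGraph α}

noncomputable def restrictInl (M : Finset (Sym2 (α ⊕ Fin k))) : Finset (Sym2 α) :=
  M.preimage (Sym2.map Sum.inl) (Sym2.map.injective Sum.inl_injective).injOn

@[simp] theorem mem_restrictInl {M : Finset (Sym2 (α ⊕ Fin k))} {d : Sym2 α} :
    d ∈ restrictInl M ↔ d.map Sum.inl ∈ M :=
  mem_preimage

theorem filter_eq_image_restrictInl [DecidableEq α] (M : Finset (Sym2 (α ⊕ Fin k)))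
    [DecidablePred fun e : Sym2 (α ⊕ Fin k) => ∃ a b : α, e = s(Sum.inl a, Sum.inl b)] :
    M.filter (fun e => ∃ a b : α, e = s(Sum.inl a, Sum.inl b))
      = (restrictInl M).image (Sym2.map Sum.inl) := by
  classical
  rw [restrictInl, image_preimage]
  exact filter_congr fun e _ => Sym2.mem_range_map_inl_iff.symm

theorem FMatching.restrictInl {M : Finset (Sym2 (α ⊕ Fin k))}
    (hM : FMatching (Hgraph G k) M) :
    FMatching G (restrictInl M) := by
  refine ⟨fun d hd => hgraph_map_inl_mem_edgeSet.mp (hM.1 _ (mem_restrictInl.mp hd)), ?_⟩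
  intro d hd d' hd' hne v hv hv'
  exact hM.2 (mem_restrictInl.mp hd) (mem_restrictInl.mp hd')
    ((Sym2.map.injective Sum.inl_injective).ne hne) (Sum.inl v)
    (Sym2.mem_map.mpr ⟨v, hv, rfl⟩) (Sym2.mem_map.mpr ⟨v, hv', rfl⟩)

variable [Fintype α] [DecidableEq α] {M : Finset (Sym2 (α ⊕ Fin k))}

theorem card_filter_notMem_range_of_perfect (hM : FMatching (Hgraph G k) M)
    (hp : FPerfect M) :
    #(M.filter (· ∉ Set.range (Sym2.map Sum.inl))) = k := by
  choose edgeAt hedgeAt hmemAt using hp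
  refine Eq.trans (card_nbij (s := univ) (fun j => edgeAt (Sum.inr j)) (fun j _ => ?_)
    (fun i _ j _ hij => ?_) (fun e he => ?_)).symm (card_fin k)
  · refine mem_filter.mpr ⟨hedgeAt _, ?_⟩
    rintro ⟨d, hd⟩
    exact Sym2.inr_notMem_map_inl j d (hd ▸ hmemAt _)
  · replace hij : edgeAt (Sum.inr i) = edgeAt (Sum.inr j) := hij
    by_contra hne
    have hedge := hM.1 _ (hedgeAt (Sum.inr i))
    rw [(Sym2.mem_and_mem_iff (Sum.inr_injective.ne hne)).mp
      ⟨hmemAt (Sum.inr i), hij ▸ hmemAt (Sum.inr j)⟩] at hedge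
    exact hgraph_not_adj_inr_inr i j hedge
  · obtain ⟨heM, hcross⟩ := mem_filter.mp (mem_coe.mp he)
    obtain ⟨a, j, rfl⟩ := (hgraph_edge_cases (hM.1 _ heM)).resolve_left hcross
    exact ⟨j, mem_coe.mpr (mem_univ j),
      hM.eq_of_mem (hedgeAt _) heM (hmemAt _) (Sym2.mem_mk_right _ _)⟩

theorem card_restrictInl_of_perfect (hM : FMatching (Hgraph G k) M) (hp : FPerfect M) :
    2 * #(restrictInl M) + k = Fintype.card α := by
  have htotal := hM.two_mul_card_eq hp
  rw [Fintype.card_sum, Fintype.card_fin] at htotal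
  have hsplit := card_filter_add_card_filter_not (s := M) (· ∈ Set.range (Sym2.map Sum.inl))
  rw [card_filter_notMem_range_of_perfect hM hp] at hsplit
  rw [restrictInl, card_preimage]
  omega

theorem wsum_wH_of_perfect (w : Sym2 α → ℝ) (W : ℝ) (hM : FMatching (Hgraph G k) M)
    (hp : FPerfect M) : wsum (wH w W) M = wsum w (restrictInl M) + k * W := by
  rw [wsum, ← sum_filter_add_sum_filter_not M (· ∈ Set.range (Sym2.map Sum.inl)),
    sum_congr rfl fun e he => wH_of_notMem_range w W (mem_filter.mp he).2, sum_const,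
    card_filter_notMem_range_of_perfect hM hp, nsmul_eq_mul, restrictInl,
    ← image_preimage _ _ (Sym2.map.injective Sum.inl_injective).injOn,
    sum_image fun _ _ _ _ h => Sym2.map.injective Sum.inl_injective h]
  simp only [wH_map_inl, wsum]

end Restrict

section Extend

variable {α : Type*} [DecidableEq α] {k : ℕ} {G : SimpleGraph α}

theorem FMatching.image_map_inl {MG : Finset (Sym2 α)} (hMG : FMatching G MG) :
    FMatching (Hgraph G k) (MG.image (Sym2.map Sum.inl)) := by
  refine ⟨fun e he => ?_, fun e he f hf hne v hve hvf => ?_⟩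
  · obtain ⟨d, hd, rfl⟩ := mem_image.mp he
    exact hgraph_map_inl_mem_edgeSet.mpr (hMG.1 d hd)
  · obtain ⟨d, hd, rfl⟩ := mem_image.mp (mem_coe.mp he)
    obtain ⟨d', hd', rfl⟩ := mem_image.mp (mem_coe.mp hf)
    obtain ⟨a, ha, rfl⟩ := Sym2.mem_map.mp hve
    obtain ⟨a', ha', hEq⟩ := Sym2.mem_map.mp hvf
    cases Sum.inl_injective hEq
    exact hMG.2 hd hd' (fun h => hne (h ▸ rfl)) a ha ha'

theorem fmatching_image_cross (g : Fin k → α) (hg : Function.Injective g) :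
    FMatching (Hgraph G k) (univ.image fun j => s(Sum.inl (g j), Sum.inr j)) := by
  refine ⟨fun e he => ?_, fun e he f hf hne v hve hvf => ?_⟩
  · obtain ⟨j, -, rfl⟩ := mem_image.mp he
    exact hgraph_cross_mem_edgeSet _ _
  · obtain ⟨i, -, rfl⟩ := mem_image.mp (mem_coe.mp he)
    obtain ⟨j, -, rfl⟩ := mem_image.mp (mem_coe.mp hf)
    have hij : i ≠ j := fun h => hne (h ▸ rfl)
    rcases Sym2.mem_iff.mp hve with rfl | rfl <;> rcases Sym2.mem_iff.mp hvf with h | h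
    · exact hij (hg (Sum.inl_injective h))
    · exact Sum.inl_ne_inr h
    · exact Sum.inr_ne_inl h
    · exact hij (Sum.inr_injective h)

theorem exists_perfect_restrictInl_eq [Fintype α] {MG : Finset (Sym2 α)}
    (hMG : FMatching G MG) (hk : 2 * #MG + k = Fintype.card α) :
    ∃ M, FMatching (Hgraph G k) M ∧ FPerfect M ∧ restrictInl M = MG := by
  set U := univ \ MG.biUnion Sym2.toFinset
  have hU : #U = k := by
    rw [card_sdiff_of_subset (subset_univ _), card_univ, hMG.card_biUnion_toFinset]
    omega
  set g : Fin k → α := fun j => (U.equivFinOfCardEq hU).symm j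
  have hgU : ∀ j, g j ∈ U := fun j => ((U.equivFinOfCardEq hU).symm j).2
  have hg : Function.Injective g :=
    Subtype.val_injective.comp (U.equivFinOfCardEq hU).symm.injective
  have hgsurj : ∀ a ∈ U, ∃ j, g j = a :=
    fun a ha => ⟨U.equivFinOfCardEq hU ⟨a, ha⟩, by simp [g]⟩
  have hUiff : ∀ a, a ∈ U ↔ ∀ d ∈ MG, a ∉ d := fun a => by simp [U]
  set cross := univ.image fun j => s(Sum.inl (g j), Sum.inr j)
  refine ⟨MG.image (Sym2.map Sum.inl) ∪ cross, ?_, ?_, ?_⟩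
  · refine hMG.image_map_inl.union (fmatching_image_cross g hg) fun v e he f hf hve hvf => ?_
    obtain ⟨d, hd, rfl⟩ := mem_image.mp he
    obtain ⟨j, -, rfl⟩ := mem_image.mp hf
    obtain ⟨a, ha, rfl⟩ := Sym2.mem_map.mp hve
    rcases Sym2.mem_iff.mp hvf with h | h
    · exact (hUiff a).mp (Sum.inl_injective h ▸ hgU j) d hd ha
    · exact Sum.inl_ne_inr h
  · rintro (a | j)
    · by_cases ha : a ∈ U
      · obtain ⟨j, rfl⟩ := hgsurj a ha
        exact ⟨_, mem_union_right _ (mem_image_of_mem _ (mem_univ j)), Sym2.mem_mk_left _ _⟩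
      · obtain ⟨d, hd, had⟩ := not_forall₂.mp (mt (hUiff a).mpr ha)
        exact ⟨_, mem_union_left _ (mem_image_of_mem _ hd),
          Sym2.mem_map.mpr ⟨a, not_not.mp had, rfl⟩⟩
    · exact ⟨_, mem_union_right _ (mem_image_of_mem _ (mem_univ j)), Sym2.mem_mk_right _ _⟩
  · ext d
    simp only [mem_restrictInl, mem_union, cross,
      (Sym2.map.injective Sum.inl_injective).mem_finset_image]
    refine or_iff_left fun h => ?_
    obtain ⟨j, -, hj⟩ := mem_image.mp h
    exact Sym2.cross_notMem_range_map_inl _ _ ⟨d, hj.symm⟩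

end Extend

open Classical in
theorem stmt17_general {α : Type*} [Fintype α] [DecidableEq α] (G : SimpleGraph α)
    (w : Sym2 α → ℝ) (W : ℝ)
    (ν μ : ℕ)
    (hν₁ : ∃ M, FMatching G M ∧ M.card = ν)
    (hμ₂ : μ ≤ ν) :
    (∃ M, FMatching (Hgraph G (2 * (ν - μ) + (Fintype.card α - 2 * ν))) M ∧
      FPerfect M) ∧
    (∀ M, FMatching (Hgraph G (2 * (ν - μ) + (Fintype.card α - 2 * ν))) M →
      FPerfect M →
      ((∀ M', FMatching (Hgraph G (2 * (ν - μ) + (Fintype.card α - 2 * ν))) M' →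
          FPerfect M' → wsum (wH w W) M' ≤ wsum (wH w W) M) ↔
        ∃ MG : Finset (Sym2 α), FMatching G MG ∧ MG.card = μ ∧
          (∀ M', FMatching G M' → M'.card = μ → wsum w M' ≤ wsum w MG) ∧
          M.filter (fun e => ∃ a b : α, e = s(Sum.inl a, Sum.inl b))
            = MG.image (Sym2.map Sum.inl))) := by
  obtain ⟨Mν, hMν, rfl⟩ := hν₁
  have hMν_le := hMν.two_mul_card_le
  set k := 2 * (#Mν - μ) + (Fintype.card α - 2 * #Mν)
  have hk {MG : Finset (Sym2 α)} : #MG = μ ↔ 2 * #MG + k = Fintype.card α := by omega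
  refine ⟨?_, fun M hM hp => ?_⟩
  · obtain ⟨MG, hMG, hcard⟩ := exists_subset_card_eq hμ₂
    obtain ⟨M, hM, hp, -⟩ := exists_perfect_restrictInl_eq (hMν.mono hMG) (hk.mp hcard)
    exact ⟨M, hM, hp⟩
  rw [filter_eq_image_restrictInl, wsum_wH_of_perfect w W hM hp]
  simp only [(image_injective (Sym2.map.injective Sum.inl_injective)).eq_iff]
  constructor
  · intro hmax
    refine ⟨_, hM.restrictInl, hk.mpr (card_restrictInl_of_perfect hM hp),
      fun MG hMG hcard => ?_, rfl⟩
    obtain ⟨M', hM', hp', rfl⟩ := exists_perfect_restrictInl_eq hMG (hk.mp hcard)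
    simpa [wsum_wH_of_perfect w W hM' hp'] using hmax M' hM' hp'
  · rintro ⟨_, -, -, hmax, rfl⟩ M' hM' hp'
    rw [wsum_wH_of_perfect w W hM' hp']
    gcongr
    exact hmax _ hM'.restrictInl (hk.mpr (card_restrictInl_of_perfect hM' hp'))

open Classical in
/-- Adding `k = 2(ν(G) − μ) + def(G)` universal new vertices (with edge weight
`W ≥` every original edge weight) yields a graph `H` with a perfect matching, and
the maximum-weight perfect matchings of `H` are exactly those whose restriction to
`G` is a maximum-weight matching of `G` among matchings of cardinality `μ`. -/
theorem stmt17 {α : Type*} [Fintype α] [DecidableEq α] (G : SimpleGraph α)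
    (w : Sym2 α → ℝ) (W : ℝ) (hW : ∀ e ∈ G.edgeSet, w e ≤ W)
    (ν μ : ℕ)
    (hν₁ : ∃ M, FMatching G M ∧ M.card = ν)
    (hν₂ : ∀ M, FMatching G M → M.card ≤ ν)
    (hμ₁ : ν ≤ 2 * μ) (hμ₂ : μ ≤ ν) :
    (∃ M, FMatching (Hgraph G (2 * (ν - μ) + (Fintype.card α - 2 * ν))) M ∧
      FPerfect M) ∧
    (∀ M, FMatching (Hgraph G (2 * (ν - μ) + (Fintype.card α - 2 * ν))) M →
      FPerfect M →
      ((∀ M', FMatching (Hgraph G (2 * (ν - μ) + (Fintype.card α - 2 * ν))) M' →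
          FPerfect M' → wsum (wH w W) M' ≤ wsum (wH w W) M) ↔
        ∃ MG : Finset (Sym2 α), FMatching G MG ∧ MG.card = μ ∧
          (∀ M', FMatching G M' → M'.card = μ → wsum w M' ≤ wsum w MG) ∧
          M.filter (fun e => ∃ a b : α, e = s(Sum.inl a, Sum.inl b))
            = MG.image (Sym2.map Sum.inl))) :=
  stmt17_general G w W ν μ hν₁ hμ₂
end
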